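/- arXiv:2201.06155 — 6 statements merged into one kernel-verified Lean document; each statement's English description precedes it below -/
import Mathlib

section
/- (Corollary 3.2, Claim 1: non-occurrence of the Lavrentiev phenomenon for the one end point problem.) Assume Λ satisfies Condition (S) and that for every K > 0: Ψ is bounded on I×B_K; for every z ∈ B_K the map s ↦ Ψ(s,z) is continuous on I; there is m_{K,Ψ} > 0 such that Ψ(s,z) ≥ m_{K,Ψ} for all s ∈ I, z ∈ B_K; and there is ν₀ > 0 such that Λ is bounded on I×B_K×B_{ν₀}. Then for every X ∈ ℝⁿ, inf{ F(y) : y ∈ W^{1,p}(I;ℝⁿ), y(t)=X } = inf{ F(y) : y Lipschitz I → ℝⁿ, y(t)=X }. -/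
/-!
Let `y` be admissible with `F(y) < ∞`, and let `ν` be a large speed threshold. Slow `y` down
where `|y'| > ν`: traverse those times at speed `m = |y'| / ν₀ ≥ 1` instead of `1`. In the new
time `τ = ρ(s) = t + ∫_t^s m` the curve `z = y ∘ ρ⁻¹` has `|z'| ≤ ν`, so it is Lipschitz; it
still starts at `X`, and since only that endpoint is prescribed it may be cut off at `T`.
The delay `ρ(s) - s` is at most `δ_ν = ∫_{|y'| > ν} |y'| / ν₀`, which tends to `0`.
On the slowed-down set `|z'| = ν₀`, where `Λ` and `Ψ` are bounded, so that part costs `O(δ_ν)`.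
Elsewhere Condition (S) bounds the effect of the delay on `Λ` by
`κ δ_ν Λ + δ_ν (β |y'|^p + γ)`, and `Ψ(ρ(s), y(s)) → Ψ(s, y(s))` by continuity of `Ψ` in time.
The lower bound on `Ψ` makes `∫ Λ(s, y, y')` finite, so dominated convergence gives
`limsup F(z_ν) ≤ F(y)`.
-/

open MeasureTheory Set Filter ENNReal NNReal Metric

noncomputable section

/-- Euclidean space `ℝⁿ`. -/
abbrev EN (n : ℕ) := EuclideanSpace ℝ (Fin n)

/-- `y` belongs to `W^{1,p}([t,T];ℝⁿ)` with derivative `y'`: it is absolutely continuous,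
given by the integral of `y'`, and both `y` and `y'` are in `L^p` on `[t,T]`. -/
def MemW1p {n : ℕ} (t T p : ℝ) (y y' : ℝ → EN n) : Prop :=
  IntervalIntegrable y' volume t T ∧
  (∀ x ∈ Set.Icc t T, y x = y t + ∫ s in t..x, y' s) ∧
  MemLp y (ENNReal.ofReal p) (volume.restrict (Set.Icc t T)) ∧
  MemLp y' (ENNReal.ofReal p) (volume.restrict (Set.Icc t T))

/-- The functional `F(y) = ∫_t^T Λ(s,y(s),y'(s)) Ψ(s,y(s)) ds`. -/
def Func {n : ℕ} (t T : ℝ) (Λ : ℝ → EN n → EN n → ℝ≥0∞) (Ψ : ℝ → EN n → ℝ≥0∞)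
    (y y' : ℝ → EN n) : ℝ≥0∞ :=
  ∫⁻ s in Set.Icc t T, Λ s (y s) (y' s) * Ψ s (y s)

/-- Condition (S): a local Lipschitz-type condition on the time variable of `Λ`. -/
def ConditionS {n : ℕ} (t T p : ℝ) (Λ : ℝ → EN n → EN n → ℝ≥0∞) : Prop :=
  ∀ K : ℝ, 0 ≤ K → ∃ κ β : ℝ, 0 ≤ κ ∧ 0 ≤ β ∧ ∃ γ : ℝ → ℝ,
    IntegrableOn γ (Set.Icc t T) volume ∧ ∃ ε : ℝ, 0 < ε ∧
      ∀ᵐ s ∂(volume.restrict (Set.Icc t T)),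
        ∀ s₁ ∈ Set.Icc (s - ε) (s + ε) ∩ Set.Icc t T,
        ∀ s₂ ∈ Set.Icc (s - ε) (s + ε) ∩ Set.Icc t T,
        ∀ z ∈ Metric.closedBall (0 : EN n) K, ∀ v : EN n,
          Λ s z v < ⊤ →
          (Λ s₂ z v - Λ s₁ z v) ⊔ (Λ s₁ z v - Λ s₂ z v) ≤
            (ENNReal.ofReal κ * Λ s z v + ENNReal.ofReal (β * ‖v‖ ^ p + γ s)) *
              ENNReal.ofReal |s₂ - s₁|

open Topology

section MemW1p

variable {n : ℕ} {t T p : ℝ}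

lemma MemW1p.integrableOn (ht : t ≤ T) {y g : ℝ → EN n} (hW : MemW1p t T p y g) :
    IntegrableOn g (Icc t T) :=
  (intervalIntegrable_iff_integrableOn_Icc_of_le ht).1 hW.1

lemma MemW1p.continuousOn (ht : t ≤ T) {y y' : ℝ → EN n} (hW : MemW1p t T p y y') :
    ContinuousOn y (Icc t T) := by
  have h := intervalIntegral.continuousOn_primitive_interval (μ := volume) (a := t) (b := T)
    (f := y') (by rw [uIcc_of_le ht]; exact hW.integrableOn ht)
  rw [uIcc_of_le ht] at h
  exact (continuousOn_const.add h).congr hW.2.1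

lemma MemW1p.exists_continuous_measurable (ht : t ≤ T) {y y' : ℝ → EN n}
    (hW : MemW1p t T p y y') (Λ : ℝ → EN n → EN n → ℝ≥0∞) (Ψ : ℝ → EN n → ℝ≥0∞) :
    ∃ y₁ g : ℝ → EN n, Continuous y₁ ∧ Measurable g ∧ MemW1p t T p y₁ g ∧ y₁ t = y t ∧
      Func t T Λ Ψ y₁ g = Func t T Λ Ψ y y' := by
  set y₁ := IccExtend ht ((Icc t T).domRestrict y)
  have hy₁ : ∀ x ∈ Icc t T, y₁ x = y x := fun x hx => IccExtend_of_mem ht _ hx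
  have hy₁ae : y =ᵐ[volume.restrict (Icc t T)] y₁ :=
    (ae_restrict_mem measurableSet_Icc).mono fun x hx => (hy₁ x hx).symm
  have hg := hW.2.2.2.1
  have hgae : y' =ᵐ[volume.restrict (Icc t T)] hg.mk y' := hg.ae_eq_mk
  have hgae' : y' =ᵐ[volume.restrict (uIoc t T)] hg.mk y' := by
    rw [uIoc_of_le ht]
    exact ae_restrict_of_ae_restrict_of_subset Ioc_subset_Icc_self hgae
  refine ⟨y₁, hg.mk y', (hW.continuousOn ht).domRestrict.Icc_extend',
    hg.stronglyMeasurable_mk.measurable,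
    ⟨hW.1.congr_ae hgae', fun x hx => ?_, hW.2.2.1.ae_eq hy₁ae, hW.2.2.2.ae_eq hgae⟩,
    hy₁ t (left_mem_Icc.2 ht), ?_⟩
  · rw [hy₁ x hx, hy₁ t (left_mem_Icc.2 ht), hW.2.1 x hx]
    congr 1
    refine intervalIntegral.integral_congr_ae ?_
    filter_upwards [(ae_restrict_iff' measurableSet_Icc).1 hgae] with s hs hsx
    exact hs (uIcc_subset_Icc (left_mem_Icc.2 ht) hx (uIoc_subset_uIcc hsx))
  · refine lintegral_congr_ae ?_
    filter_upwards [hy₁ae, hgae] with s h1 h2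
    rw [h1, h2]

end MemW1p


section TimeChange

variable {m : ℝ → ℝ}

def timeChange (t : ℝ) (m : ℝ → ℝ) (s : ℝ) : ℝ := t + ∫ u in t..s, m u

variable (t : ℝ) (hm : ∀ a b, IntervalIntegrable m volume a b) (hm1 : ∀ s, 1 ≤ m s)
include hm

lemma timeChange_sub (a b : ℝ) : timeChange t m b - timeChange t m a = ∫ u in a..b, m u := by
  rw [timeChange, timeChange, add_sub_add_left_eq_sub,
    intervalIntegral.integral_interval_sub_left (hm t b) (hm t a)]

lemma continuous_timeChange : Continuous (timeChange t m) :=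
  continuous_const.add (intervalIntegral.continuous_primitive hm t)

include hm1

lemma sub_le_timeChange_sub {a b : ℝ} (hab : a ≤ b) :
    b - a ≤ timeChange t m b - timeChange t m a := by
  rw [timeChange_sub t hm]
  simpa using intervalIntegral.integral_mono_on hab intervalIntegrable_const (hm a b)
    fun x _ => hm1 x

lemma timeChange_strictMono : StrictMono (timeChange t m) := fun a b hab => by
  linarith [sub_le_timeChange_sub t hm hm1 hab.le]

lemma timeChange_surjective : Function.Surjective (timeChange t m) := by
  have h := fun b => sub_le_timeChange_sub t hm hm1 (a := 0) (b := b)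
  have h' := fun a => sub_le_timeChange_sub t hm hm1 (b := 0) (a := a)
  refine (continuous_timeChange t hm).surjective ?_ ?_
  · refine tendsto_atTop_mono' _ ?_ (tendsto_atTop_add_const_left _ (timeChange t m 0) tendsto_id)
    filter_upwards [eventually_ge_atTop 0] with s hs
    linarith [h s hs, show id s = s from rfl]
  · refine tendsto_atBot_mono' _ ?_ (tendsto_atBot_add_const_left _ (timeChange t m 0) tendsto_id)
    filter_upwards [eventually_le_atBot 0] with s hs
    linarith [h' s hs, show id s = s from rfl]

def timeChangeIso : ℝ ≃o ℝ :=
  (timeChange_strictMono t hm hm1).orderIsoOfSurjective _ (timeChange_surjective t hm hm1)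

@[simp]
lemma timeChangeIso_apply (s : ℝ) : timeChangeIso t hm hm1 s = timeChange t m s := rfl

@[simp]
lemma timeChange_timeChangeIso_symm (τ : ℝ) :
    timeChange t m ((timeChangeIso t hm hm1).symm τ) = τ :=
  (timeChangeIso t hm hm1).apply_symm_apply τ

omit hm hm1 in
@[simp]
lemma timeChange_self : timeChange t m t = t := by simp [timeChange]

lemma le_timeChange {s : ℝ} (hs : t ≤ s) : s ≤ timeChange t m s := by
  linarith [sub_le_timeChange_sub t hm hm1 hs, timeChange_self (m := m) t]

lemma map_withDensity_timeChange :
    (volume.withDensity fun s => ENNReal.ofReal (m s)).map (timeChange t m) = volume := by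
  set e := timeChangeIso t hm hm1
  refine (Measure.ext_of_Ioc _ _ fun a b hab => ?_).symm
  have hab' : e.symm a ≤ e.symm b := e.symm.monotone hab.le
  rw [Measure.map_apply (continuous_timeChange t hm).measurable measurableSet_Ioc]
  show _ = (volume.withDensity fun s => ENNReal.ofReal (m s)) (e ⁻¹' Ioc a b)
  rw [e.preimage_Ioc, withDensity_apply _ measurableSet_Ioc,
    ← ofReal_integral_eq_lintegral_ofReal, ← intervalIntegral.integral_of_le hab',
    ← timeChange_sub t hm, ← timeChangeIso_apply t hm hm1, ← timeChangeIso_apply t hm hm1,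
    e.apply_symm_apply, e.apply_symm_apply, Real.volume_Ioc]
  · exact (intervalIntegrable_iff_integrableOn_Ioc_of_le hab').1 (hm _ _)
  · exact Eventually.of_forall fun s => zero_le_one.trans (hm1 s)

lemma measurePreserving_timeChangeIso_symm :
    MeasurePreserving (timeChangeIso t hm hm1).symm volume
      (volume.withDensity fun s => ENNReal.ofReal (m s)) := by
  set e := timeChangeIso t hm hm1
  refine ⟨e.symm.continuous.measurable, ?_⟩
  have h := congrArg (Measure.map e.symm) (map_withDensity_timeChange t hm hm1)
  rw [Measure.map_map e.symm.continuous.measurable (continuous_timeChange t hm).measurable] at h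
  have hid : e.symm ∘ timeChange t m = id := funext e.symm_apply_apply
  rw [← h, hid, Measure.map_id]

end TimeChange

section ChangeOfVariables

variable {m : ℝ → ℝ} (t : ℝ) (hm : ∀ a b, IntervalIntegrable m volume a b) (hm1 : ∀ s, 1 ≤ m s)
include hm hm1

lemma preimage_timeChangeIso_symm_Icc (a b : ℝ) :
    (timeChangeIso t hm hm1).symm ⁻¹' Icc a b = Icc (timeChange t m a) (timeChange t m b) :=
  (timeChangeIso t hm hm1).symm.preimage_Icc a b

lemma setLIntegral_comp_timeChangeIso_symm (hm_meas : Measurable m) (f : ℝ → ℝ≥0∞) (a b : ℝ) :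
    ∫⁻ τ in Icc (timeChange t m a) (timeChange t m b), f ((timeChangeIso t hm hm1).symm τ) =
      ∫⁻ s in Icc a b, ENNReal.ofReal (m s) * f s := by
  set e := timeChangeIso t hm hm1
  rw [← preimage_timeChangeIso_symm_Icc t hm hm1,
    (measurePreserving_timeChangeIso_symm t hm hm1).setLIntegral_comp_preimage_emb
      e.symm.toHomeomorph.measurableEmbedding,
    setLIntegral_withDensity_eq_setLIntegral_mul_non_measurable _ hm_meas.ennreal_ofReal _
      measurableSet_Icc (Eventually.of_forall fun _ => ofReal_lt_top)]
  rfl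

lemma intervalIntegral_comp_timeChangeIso_symm {E : Type*} [NormedAddCommGroup E]
    [NormedSpace ℝ E] (hm_meas : Measurable m) (f : ℝ → E) {a b : ℝ} (hab : a ≤ b) :
    ∫ τ in timeChange t m a..timeChange t m b, f ((timeChangeIso t hm hm1).symm τ) =
      ∫ s in a..b, m s • f s := by
  set e := timeChangeIso t hm hm1
  have hρ : timeChange t m a ≤ timeChange t m b := e.monotone hab
  rw [intervalIntegral.integral_of_le hab, intervalIntegral.integral_of_le hρ]
  have hpre : e.symm ⁻¹' Ioc a b = Ioc (timeChange t m a) (timeChange t m b) :=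
    e.symm.preimage_Ioc a b
  rw [← hpre, (measurePreserving_timeChangeIso_symm t hm hm1).setIntegral_preimage_emb
      e.symm.toHomeomorph.measurableEmbedding,
    show (fun s => ENNReal.ofReal (m s)) = fun s => ((m s).toNNReal : ℝ≥0∞) from rfl,
    setIntegral_withDensity_eq_setIntegral_smul hm_meas.real_toNNReal _ measurableSet_Ioc]
  refine setIntegral_congr_fun measurableSet_Ioc fun s _ => ?_
  rw [NNReal.smul_def, Real.coe_toNNReal _ (zero_le_one.trans (hm1 s))]

end ChangeOfVariables

section Reparametrization

variable {E : Type*} [NormedAddCommGroup E] [NormedSpace ℝ E] {t T : ℝ}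

lemma lipschitzOnWith_of_eq_add_integral {y y' : ℝ → E} {L : ℝ≥0}
    (hint : IntervalIntegrable y' volume t T) (hy : ∀ x ∈ Icc t T, y x = y t + ∫ s in t..x, y' s)
    (hbd : ∀ᵐ s ∂volume.restrict (Icc t T), ‖y' s‖ ≤ L) : LipschitzOnWith L y (Icc t T) := by
  have hint' : ∀ x ∈ Icc t T, IntervalIntegrable y' volume t x := fun x hx =>
    hint.mono_set (uIcc_subset_uIcc_left (Icc_subset_uIcc hx))
  refine LipschitzOnWith.of_dist_le_mul fun a ha b hb => ?_
  rw [dist_eq_norm, hy a ha, hy b hb, add_sub_add_left_eq_sub,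
    intervalIntegral.integral_interval_sub_left (hint' a ha) (hint' b hb), Real.dist_eq]
  refine intervalIntegral.norm_integral_le_of_norm_le_const_ae (f := y') ?_
  filter_upwards [(ae_restrict_iff' measurableSet_Icc).1 hbd] with s hs hsab
  exact hs (uIcc_subset_Icc hb ha (uIoc_subset_uIcc hsab))

variable {m : ℝ → ℝ} (hm : ∀ a b, IntervalIntegrable m volume a b) (hm1 : ∀ s, 1 ≤ m s)
include hm hm1

@[simp]
lemma timeChangeIso_symm_self : (timeChangeIso t hm hm1).symm t = t := by
  rw [OrderIso.symm_apply_eq, timeChangeIso_apply, timeChange_self]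

lemma timeChangeIso_symm_mem_Icc {τ : ℝ} (hτ : τ ∈ Icc t T) :
    (timeChangeIso t hm hm1).symm τ ∈ Icc t T := by
  refine ⟨?_, (OrderIso.symm_apply_le _).2 (hτ.2.trans (le_timeChange t hm hm1 (hτ.1.trans hτ.2)))⟩
  simpa using (timeChangeIso t hm hm1).symm.monotone hτ.1

variable {L : ℝ}

lemma norm_inv_smul_comp_timeChangeIso_symm_le {g : ℝ → E} (hgL : ∀ s ∈ Icc t T, ‖g s‖ ≤ L * m s)
    {τ : ℝ} (hτ : τ ∈ Icc t T) :
    ‖(m ((timeChangeIso t hm hm1).symm τ))⁻¹ • g ((timeChangeIso t hm hm1).symm τ)‖ ≤ L := by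
  set s := (timeChangeIso t hm hm1).symm τ
  have hms : 0 < m s := zero_lt_one.trans_le (hm1 s)
  rw [norm_smul, norm_inv, Real.norm_of_nonneg hms.le, inv_mul_le_iff₀ hms, mul_comm]
  exact hgL s (timeChangeIso_symm_mem_Icc hm hm1 hτ)

lemma memW1p_comp_timeChangeIso_symm {n : ℕ} {y g : ℝ → EN n} {p : ℝ} (ht : t ≤ T)
    (hm_meas : Measurable m) (hy : Continuous y) (hg : Measurable g) (hW : MemW1p t T p y g)
    (hgL : ∀ s ∈ Icc t T, ‖g s‖ ≤ L * m s) :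
    MemW1p t T p (y ∘ (timeChangeIso t hm hm1).symm)
      (fun τ => (m ((timeChangeIso t hm hm1).symm τ))⁻¹ • g ((timeChangeIso t hm hm1).symm τ)) := by
  set e := timeChangeIso t hm hm1
  have hσ : Measurable e.symm := e.symm.continuous.measurable
  have hz'_bd : ∀ᵐ τ ∂volume.restrict (Icc t T), ‖(m (e.symm τ))⁻¹ • g (e.symm τ)‖ ≤ L :=
    (ae_restrict_iff' measurableSet_Icc).2 <| Eventually.of_forall fun τ =>
      norm_inv_smul_comp_timeChangeIso_symm_le hm hm1 hgL
  have hz'_Lp : ∀ q, MemLp (fun τ => (m (e.symm τ))⁻¹ • g (e.symm τ)) q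
      (volume.restrict (Icc t T)) := fun q =>
    MemLp.of_bound (((hm_meas.comp hσ).inv.smul (hg.comp hσ)).aestronglyMeasurable) L hz'_bd
  obtain ⟨C, hC⟩ := isCompact_Icc.exists_bound_of_continuousOn hy.continuousOn (s := Icc t T)
  refine ⟨?_, fun x hx => ?_, ?_, hz'_Lp _⟩
  · exact (intervalIntegrable_iff_integrableOn_Icc_of_le ht).2
      (memLp_one_iff_integrable.1 (hz'_Lp 1))
  · have hσx := timeChangeIso_symm_mem_Icc hm hm1 hx
    calc y (e.symm x) = y t + ∫ s in t..e.symm x, m s • ((m s)⁻¹ • g s) := by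
          rw [hW.2.1 _ hσx]
          congr 1
          refine intervalIntegral.integral_congr fun s _ => ?_
          rw [smul_smul, mul_inv_cancel₀ (zero_lt_one.trans_le (hm1 s)).ne', one_smul]
      _ = (y ∘ e.symm) t + ∫ τ in t..x, (m (e.symm τ))⁻¹ • g (e.symm τ) := by
          rw [← intervalIntegral_comp_timeChangeIso_symm t hm hm1 hm_meas _ hσx.1]
          simp [e]
  · refine MemLp.of_bound (hy.comp e.symm.continuous).aestronglyMeasurable C ?_
    filter_upwards [ae_restrict_mem measurableSet_Icc] with τ hτ
    exact hC _ (timeChangeIso_symm_mem_Icc hm hm1 hτ)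

lemma func_comp_timeChangeIso_symm_le {n : ℕ} (ht : t ≤ T) (hm_meas : Measurable m)
    (Λ : ℝ → EN n → EN n → ℝ≥0∞) (Ψ : ℝ → EN n → ℝ≥0∞) (y w : ℝ → EN n) :
    Func t T Λ Ψ (y ∘ (timeChangeIso t hm hm1).symm) (w ∘ (timeChangeIso t hm hm1).symm) ≤
      ∫⁻ s in Icc t T, ENNReal.ofReal (m s) *
        (Λ (min (timeChange t m s) T) (y s) (w s) * Ψ (min (timeChange t m s) T) (y s)) := by
  set e := timeChangeIso t hm hm1
  set G : ℝ → ℝ≥0∞ := fun s =>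
    Λ (min (timeChange t m s) T) (y s) (w s) * Ψ (min (timeChange t m s) T) (y s)
  calc Func t T Λ Ψ (y ∘ e.symm) (w ∘ e.symm) = ∫⁻ τ in Icc t T, G (e.symm τ) := by
        refine setLIntegral_congr_fun measurableSet_Icc fun τ hτ => ?_
        simp only [G, e, timeChange_timeChangeIso_symm, min_eq_left hτ.2, Function.comp_apply]
    _ ≤ ∫⁻ τ in Icc (timeChange t m t) (timeChange t m T), G (e.symm τ) := by
        rw [timeChange_self]
        exact lintegral_mono_set (Icc_subset_Icc_right (le_timeChange t hm hm1 ht))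
    _ = ∫⁻ s in Icc t T, ENNReal.ofReal (m s) * G s :=
        setLIntegral_comp_timeChangeIso_symm t hm hm1 hm_meas G t T

end Reparametrization

section Slowdown

variable {E : Type*} [NormedAddCommGroup E] {t T ν ν₀ : ℝ} {g : ℝ → E}

def slowdownSpeed (t T ν ν₀ : ℝ) (g : ℝ → E) (s : ℝ) : ℝ :=
  if s ∈ Icc t T ∧ ν < ‖g s‖ then ‖g s‖ / ν₀ else 1

/-- The time the slowed-down curve spends on `{ν < ‖g‖}`; it bounds every delay `ρ s - s`. -/
def slowdownTime (t T ν ν₀ : ℝ) (g : ℝ → E) : ℝ :=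
  ∫ s in Icc t T ∩ {s | ν < ‖g s‖}, ‖g s‖ / ν₀

/-- The new time `ρ s` at which the slowed-down curve passes through `y s`, capped at `T`. -/
def slowdownShift (t T ν ν₀ : ℝ) (g : ℝ → E) (s : ℝ) : ℝ :=
  min (timeChange t (slowdownSpeed t T ν ν₀ g) s) T

lemma slowdownSpeed_of_lt {s : ℝ} (hs : s ∈ Icc t T) (hgs : ν < ‖g s‖) :
    slowdownSpeed t T ν ν₀ g s = ‖g s‖ / ν₀ :=
  if_pos ⟨hs, hgs⟩

lemma slowdownSpeed_of_le {s : ℝ} (hgs : ‖g s‖ ≤ ν) : slowdownSpeed t T ν ν₀ g s = 1 :=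
  if_neg fun h => (h.2.trans_le hgs).false

lemma measurable_slowdownSpeed [MeasurableSpace E] [OpensMeasurableSpace E] (hg : Measurable g) :
    Measurable (slowdownSpeed t T ν ν₀ g) :=
  Measurable.ite (measurableSet_Icc.inter (measurableSet_lt measurable_const hg.norm))
    (hg.norm.div_const ν₀) measurable_const

lemma tendsto_slowdownTime [MeasurableSpace E] [OpensMeasurableSpace E] (hg : Measurable g)
    (hgi : IntegrableOn g (Icc t T)) :
    Tendsto (fun ν => slowdownTime t T ν ν₀ g) atTop (𝓝 0) := by
  have hempty : ⋂ ν : ℝ, Icc t T ∩ {s | ν < ‖g s‖} = ∅ :=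
    eq_empty_of_forall_notMem fun s hs => lt_irrefl ‖g s‖ (mem_iInter.1 hs ‖g s‖).2
  simpa [slowdownTime, hempty] using
    tendsto_setIntegral_of_antitone (μ := volume) (f := fun s => ‖g s‖ / ν₀)
    (fun ν => measurableSet_Icc.inter (measurableSet_lt measurable_const hg.norm))
    (fun ν ν' h => inter_subset_inter_right _ fun s (hs : ν' < ‖g s‖) => h.trans_lt hs)
    ⟨0, IntegrableOn.mono_set (hgi.norm.div_const ν₀) inter_subset_left⟩

variable (hν₀ : 0 < ν₀) (hν : ν₀ ≤ ν)
include hν₀ hν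

lemma one_le_slowdownSpeed (s : ℝ) : 1 ≤ slowdownSpeed t T ν ν₀ g s := by
  unfold slowdownSpeed
  split_ifs with h
  · rw [le_div_iff₀ hν₀, one_mul]
    exact hν.trans h.2.le
  · exact le_rfl

lemma norm_le_mul_slowdownSpeed {s : ℝ} (hs : s ∈ Icc t T) :
    ‖g s‖ ≤ ν * slowdownSpeed t T ν ν₀ g s := by
  rcases lt_or_ge ν ‖g s‖ with hgs | hgs
  · rw [slowdownSpeed_of_lt hs hgs, mul_div_assoc', le_div_iff₀ hν₀, mul_comm ν]
    exact mul_le_mul_of_nonneg_left hν (norm_nonneg _)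
  · rwa [slowdownSpeed_of_le hgs, mul_one]

lemma intervalIntegrable_slowdownSpeed [MeasurableSpace E] [OpensMeasurableSpace E]
    (hg : Measurable g) (hgi : IntegrableOn g (Icc t T)) (a b : ℝ) :
    IntervalIntegrable (slowdownSpeed t T ν ν₀ g) volume a b := by
  have hdom : IntervalIntegrable (fun s => 1 + (Icc t T).indicator (fun s => ‖g s‖ / ν₀) s)
      volume a b :=
    intervalIntegrable_const.add
      (((integrable_indicator_iff measurableSet_Icc).2 (hgi.norm.div_const ν₀)).intervalIntegrable)
  refine hdom.mono_fun' (measurable_slowdownSpeed hg).aestronglyMeasurable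
    (Eventually.of_forall fun s => ?_)
  have hnn : 0 ≤ (Icc t T).indicator (fun s => ‖g s‖ / ν₀) s :=
    indicator_nonneg (fun s _ => by positivity) s
  change ‖slowdownSpeed t T ν ν₀ g s‖ ≤ 1 + _
  rw [Real.norm_of_nonneg (zero_le_one.trans (one_le_slowdownSpeed hν₀ hν s))]
  unfold slowdownSpeed
  split_ifs with h
  · rw [indicator_of_mem h.1]
    linarith
  · linarith

variable [MeasurableSpace E] [OpensMeasurableSpace E] (hg : Measurable g)
  (hgi : IntegrableOn g (Icc t T))
include hg hgi

lemma timeChange_slowdownSpeed_sub_le {s : ℝ} (hs : s ∈ Icc t T) :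
    timeChange t (slowdownSpeed t T ν ν₀ g) s - s ≤ slowdownTime t T ν ν₀ g := by
  set m := slowdownSpeed t T ν ν₀ g
  set F := (Icc t T ∩ {u | ν < ‖g u‖}).indicator fun u => ‖g u‖ / ν₀
  have hB : MeasurableSet (Icc t T ∩ {u | ν < ‖g u‖}) :=
    measurableSet_Icc.inter (measurableSet_lt measurable_const hg.norm)
  have hF : Integrable F := (integrable_indicator_iff hB).2
    (IntegrableOn.mono_set (hgi.norm.div_const ν₀) inter_subset_left)
  have hF0 : 0 ≤ F := indicator_nonneg fun u _ => by positivity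
  have hm := intervalIntegrable_slowdownSpeed hν₀ hν hg hgi
  calc timeChange t m s - s = ∫ u in t..s, (m u - 1) := by
        rw [intervalIntegral.integral_sub (hm t s) intervalIntegrable_const,
          ← timeChange_sub t hm, timeChange_self]
        simp [m]
    _ ≤ ∫ u in t..s, F u := by
        refine intervalIntegral.integral_mono_on hs.1 ((hm t s).sub intervalIntegrable_const)
          hF.intervalIntegrable fun u _ => ?_
        by_cases hu : u ∈ Icc t T ∩ {u | ν < ‖g u‖}
        · simp only [F, m, indicator_of_mem hu, slowdownSpeed_of_lt hu.1 hu.2]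
          linarith
        · simp only [F, indicator_of_notMem hu, show m u = 1 from if_neg hu, sub_self, le_refl]
    _ ≤ ∫ u, F u := by
        rw [intervalIntegral.integral_of_le hs.1]
        exact setIntegral_le_integral hF (Eventually.of_forall hF0)
    _ = slowdownTime t T ν ν₀ g := integral_indicator hB

lemma slowdownShift_mem {s : ℝ} (hs : s ∈ Icc t T) :
    slowdownShift t T ν ν₀ g s ∈ Icc s (s + slowdownTime t T ν ν₀ g) ∩ Icc t T := by
  have hm := intervalIntegrable_slowdownSpeed hν₀ hν hg hgi
  have hs' := le_timeChange t hm (one_le_slowdownSpeed hν₀ hν) hs.1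
  have hδ := timeChange_slowdownSpeed_sub_le hν₀ hν hg hgi hs
  exact ⟨⟨le_min hs' hs.2, (min_le_left _ _).trans (by linarith)⟩,
    hs.1.trans (le_min hs' hs.2), min_le_right _ _⟩

omit hν in
lemma setLIntegral_ofReal_indicator_eq_slowdownTime :
    ∫⁻ s in Icc t T, ENNReal.ofReal ({u | ν < ‖g u‖}.indicator (fun u => ‖g u‖ / ν₀) s) =
      ENNReal.ofReal (slowdownTime t T ν ν₀ g) := by
  have hB : MeasurableSet {u | ν < ‖g u‖} := measurableSet_lt measurable_const hg.norm
  rw [← ofReal_integral_eq_lintegral_ofReal, setIntegral_indicator hB, slowdownTime]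
  · exact (integrable_indicator_iff hB).2 (hgi.norm.div_const ν₀ |>.integrableOn)
  · exact Eventually.of_forall (indicator_nonneg fun u _ => div_nonneg (norm_nonneg _) hν₀.le)

omit hν in
lemma setLIntegral_slowdown_majorant {F G : ℝ → ℝ≥0∞} (hF : Measurable F) (a c₁ c₂ : ℝ≥0∞)
    (hc₂ : c₂ ≠ ⊤) :
    ∫⁻ s in Icc t T, (ENNReal.ofReal ({u | ν < ‖g u‖}.indicator (fun u => ‖g u‖ / ν₀) s) * a +
        c₁ * F s + c₂ * G s) =
      a * ENNReal.ofReal (slowdownTime t T ν ν₀ g) + c₁ * (∫⁻ s in Icc t T, F s) +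
        c₂ * ∫⁻ s in Icc t T, G s := by
  have hind : Measurable fun s =>
      ENNReal.ofReal ({u | ν < ‖g u‖}.indicator (fun u => ‖g u‖ / ν₀) s) :=
    ((hg.norm.div_const ν₀).indicator (measurableSet_lt measurable_const hg.norm)).ennreal_ofReal
  have hA : Measurable fun s =>
      ENNReal.ofReal ({u | ν < ‖g u‖}.indicator (fun u => ‖g u‖ / ν₀) s) * a + c₁ * F s :=
    (hind.mul_const a).add (hF.const_mul c₁)
  rw [lintegral_add_left hA, lintegral_add_left (hind.mul_const a), lintegral_mul_const _ hind,
    setLIntegral_ofReal_indicator_eq_slowdownTime hν₀ hg hgi,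
    lintegral_const_mul c₁ hF, lintegral_const_mul' c₂ G hc₂, mul_comm a]

lemma continuous_slowdownShift : Continuous (slowdownShift t T ν ν₀ g) :=
  (continuous_timeChange t (intervalIntegrable_slowdownSpeed hν₀ hν hg hgi)).min continuous_const

end Slowdown

section Energy

variable {n : ℕ} {t T p : ℝ} {Λ : ℝ → EN n → EN n → ℝ≥0∞} {Ψ : ℝ → EN n → ℝ≥0∞}

lemma ConditionS.exists_forward_bound (hS : ConditionS t T p Λ) {K : ℝ} (hK : 0 ≤ K) :
    ∃ κ β : ℝ, ∃ γ : ℝ → ℝ, IntegrableOn γ (Icc t T) ∧ ∃ ε > 0,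
      ∀ᵐ s ∂volume.restrict (Icc t T), ∀ δ ≤ ε, ∀ θ ∈ Icc s (s + δ) ∩ Icc t T,
        ∀ z ∈ closedBall (0 : EN n) K, ∀ v, Λ s z v < ⊤ →
          Λ θ z v ≤ (1 + ENNReal.ofReal κ * ENNReal.ofReal δ) * Λ s z v +
            ENNReal.ofReal (β * ‖v‖ ^ p + γ s) * ENNReal.ofReal δ := by
  obtain ⟨κ, β, -, -, γ, hγ, ε, hε, hSK⟩ := hS K hK
  refine ⟨κ, β, γ, hγ, ε, hε, ?_⟩
  filter_upwards [hSK, ae_restrict_mem measurableSet_Icc] with s hs hsI δ hδ θ hθ z hz v hv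
  have hθs : |θ - s| ≤ δ := by rw [abs_of_nonneg (by linarith [hθ.1.1])]; linarith [hθ.1.2]
  have hsub := le_sup_left.trans
    (hs s ⟨⟨by linarith, by linarith⟩, hsI⟩ θ ⟨⟨by linarith [hθ.1.1], by linarith [hθ.1.2]⟩, hθ.2⟩
      z hz v hv)
  calc Λ θ z v ≤ (ENNReal.ofReal κ * Λ s z v + ENNReal.ofReal (β * ‖v‖ ^ p + γ s)) *
        ENNReal.ofReal |θ - s| + Λ s z v := tsub_le_iff_right.1 hsub
    _ ≤ (ENNReal.ofReal κ * Λ s z v + ENNReal.ofReal (β * ‖v‖ ^ p + γ s)) *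
        ENNReal.ofReal δ + Λ s z v := by gcongr
    _ = _ := by ring

lemma slowdownSpeed_mul_integrand_le {y g : ℝ → EN n} {K κ β ν ν₀ δ s θ : ℝ} {γ : ℝ → ℝ}
    {MΛ MΨ : ℝ≥0} (hν₀ : 0 < ν₀) (hν : ν₀ ≤ ν)
    (hMΛ : ∀ s ∈ Icc t T, ∀ z ∈ closedBall (0 : EN n) K, ∀ v ∈ closedBall (0 : EN n) ν₀,
      Λ s z v ≤ MΛ)
    (hMΨ : ∀ s ∈ Icc t T, ∀ z ∈ closedBall (0 : EN n) K, Ψ s z ≤ MΨ)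
    (hs : s ∈ Icc t T) (hθ : θ ∈ Icc t T) (hys : y s ∈ closedBall (0 : EN n) K)
    (hΛθ : ‖g s‖ ≤ ν → Λ θ (y s) (g s) ≤ (1 + ENNReal.ofReal κ * ENNReal.ofReal δ) *
      Λ s (y s) (g s) + ENNReal.ofReal (β * ‖g s‖ ^ p + γ s) * ENNReal.ofReal δ) :
    ENNReal.ofReal (slowdownSpeed t T ν ν₀ g s) *
        (Λ θ (y s) ((slowdownSpeed t T ν ν₀ g s)⁻¹ • g s) * Ψ θ (y s)) ≤
      ENNReal.ofReal ({u | ν < ‖g u‖}.indicator (fun u => ‖g u‖ / ν₀) s) * (MΛ * MΨ) +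
        (1 + ENNReal.ofReal κ * ENNReal.ofReal δ) * (Λ s (y s) (g s) * Ψ θ (y s)) +
        ENNReal.ofReal δ * MΨ * ENNReal.ofReal (β * ‖g s‖ ^ p + |γ s|) := by
  have hΨθ := hMΨ θ hθ _ hys
  rcases lt_or_ge ν ‖g s‖ with hgs | hgs
  · have hspeed := slowdownSpeed_of_lt (ν₀ := ν₀) hs hgs
    have hv : (slowdownSpeed t T ν ν₀ g s)⁻¹ • g s ∈ closedBall (0 : EN n) ν₀ := by
      have : 0 < ‖g s‖ := (hν₀.trans_le hν).trans hgs
      rw [mem_closedBall_zero_iff, norm_smul, hspeed, norm_inv, Real.norm_of_nonneg (by positivity),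
        inv_div, div_mul_cancel₀ _ this.ne']
    rw [indicator_of_mem (show s ∈ {u | ν < ‖g u‖} from hgs), ← hspeed, add_assoc]
    exact le_self_add.trans' (by gcongr; exact hMΛ θ hθ _ hys _ hv)
  · rw [slowdownSpeed_of_le hgs, indicator_of_notMem (show s ∉ {u | ν < ‖g u‖} from hgs.not_gt),
      ENNReal.ofReal_zero, zero_mul, zero_add, ENNReal.ofReal_one, one_mul, inv_one, one_smul]
    have hγ : ENNReal.ofReal (β * ‖g s‖ ^ p + γ s) ≤ ENNReal.ofReal (β * ‖g s‖ ^ p + |γ s|) :=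
      ENNReal.ofReal_le_ofReal (by linarith [le_abs_self (γ s)])
    calc Λ θ (y s) (g s) * Ψ θ (y s)
        ≤ ((1 + ENNReal.ofReal κ * ENNReal.ofReal δ) * Λ s (y s) (g s) +
            ENNReal.ofReal (β * ‖g s‖ ^ p + |γ s|) * ENNReal.ofReal δ) * Ψ θ (y s) := by
          gcongr
          exact (hΛθ hgs).trans (by gcongr)
      _ = (1 + ENNReal.ofReal κ * ENNReal.ofReal δ) * (Λ s (y s) (g s) * Ψ θ (y s)) +
            ENNReal.ofReal δ * Ψ θ (y s) * ENNReal.ofReal (β * ‖g s‖ ^ p + |γ s|) := by ring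
      _ ≤ _ := by gcongr

end Energy

section Estimate

variable {n : ℕ} {t T p : ℝ} {Λ : ℝ → EN n → EN n → ℝ≥0∞} {Ψ : ℝ → EN n → ℝ≥0∞}

theorem exists_lipschitz_func_le (ht : t ≤ T)
    (hΛm : Measurable fun q : ℝ × EN n × EN n => Λ q.1 q.2.1 q.2.2)
    (hΨm : Measurable fun q : ℝ × EN n => Ψ q.1 q.2)
    {y g : ℝ → EN n} (hy : Continuous y) (hg : Measurable g) (hW : MemW1p t T p y g)
    {K κ β ε ν ν₀ : ℝ} {γ : ℝ → ℝ} {MΛ MΨ : ℝ≥0}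
    (hyK : ∀ s ∈ Icc t T, y s ∈ closedBall (0 : EN n) K)
    (hfwd : ∀ᵐ s ∂volume.restrict (Icc t T), ∀ δ ≤ ε, ∀ θ ∈ Icc s (s + δ) ∩ Icc t T,
      ∀ z ∈ closedBall (0 : EN n) K, ∀ v, Λ s z v < ⊤ →
        Λ θ z v ≤ (1 + ENNReal.ofReal κ * ENNReal.ofReal δ) * Λ s z v +
          ENNReal.ofReal (β * ‖v‖ ^ p + γ s) * ENNReal.ofReal δ)
    (hν₀ : 0 < ν₀)
    (hMΛ : ∀ s ∈ Icc t T, ∀ z ∈ closedBall (0 : EN n) K, ∀ v ∈ closedBall (0 : EN n) ν₀,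
      Λ s z v ≤ MΛ)
    (hMΨ : ∀ s ∈ Icc t T, ∀ z ∈ closedBall (0 : EN n) K, Ψ s z ≤ MΨ)
    (hΛfin : ∀ᵐ s ∂volume.restrict (Icc t T), Λ s (y s) (g s) < ⊤)
    (hν : ν₀ ≤ ν) (hδε : slowdownTime t T ν ν₀ g ≤ ε) :
    ∃ z z' : ℝ → EN n, MemW1p t T p z z' ∧ (∃ C : ℝ≥0, LipschitzOnWith C z (Icc t T)) ∧
      z t = y t ∧ Func t T Λ Ψ z z' ≤
        MΛ * MΨ * ENNReal.ofReal (slowdownTime t T ν ν₀ g) +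
        (1 + ENNReal.ofReal κ * ENNReal.ofReal (slowdownTime t T ν ν₀ g)) *
          (∫⁻ s in Icc t T, Λ s (y s) (g s) * Ψ (slowdownShift t T ν ν₀ g s) (y s)) +
        ENNReal.ofReal (slowdownTime t T ν ν₀ g) * MΨ *
          ∫⁻ s in Icc t T, ENNReal.ofReal (β * ‖g s‖ ^ p + |γ s|) := by
  set δ := slowdownTime t T ν ν₀ g
  set m := slowdownSpeed t T ν ν₀ g
  set θ := slowdownShift t T ν ν₀ g
  have hgi := hW.integrableOn ht
  have hm := intervalIntegrable_slowdownSpeed hν₀ hν hg hgi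
  have hm1 := one_le_slowdownSpeed (t := t) (T := T) (g := g) hν₀ hν
  have hm_meas : Measurable m := measurable_slowdownSpeed hg
  have hgm : ∀ s ∈ Icc t T, ‖g s‖ ≤ ν * m s := fun s hs => norm_le_mul_slowdownSpeed hν₀ hν hs
  set e := timeChangeIso t hm hm1
  have hW' := memW1p_comp_timeChangeIso_symm hm hm1 ht hm_meas hy hg hW hgm
  refine ⟨y ∘ e.symm, _, hW', ⟨ν.toNNReal, lipschitzOnWith_of_eq_add_integral hW'.1 hW'.2.1 ?_⟩,
    by simp [e], ?_⟩
  · refine (ae_restrict_iff' measurableSet_Icc).2 (Eventually.of_forall fun τ hτ => ?_)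
    exact (norm_inv_smul_comp_timeChangeIso_symm_le hm hm1 hgm hτ).trans (Real.le_coe_toNNReal ν)
  have hF : Measurable fun s => Λ s (y s) (g s) * Ψ (θ s) (y s) :=
    (hΛm.comp (measurable_id.prodMk (hy.measurable.prodMk hg))).mul
      (hΨm.comp ((continuous_slowdownShift hν₀ hν hg hgi).measurable.prodMk hy.measurable))
  calc Func t T Λ Ψ (y ∘ e.symm) (fun τ => (m (e.symm τ))⁻¹ • g (e.symm τ))
      ≤ ∫⁻ s in Icc t T, ENNReal.ofReal (m s) *
          (Λ (θ s) (y s) ((m s)⁻¹ • g s) * Ψ (θ s) (y s)) :=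
        func_comp_timeChangeIso_symm_le hm hm1 ht hm_meas Λ Ψ y (fun s => (m s)⁻¹ • g s)
    _ ≤ ∫⁻ s in Icc t T,
          (ENNReal.ofReal ({u | ν < ‖g u‖}.indicator (fun u => ‖g u‖ / ν₀) s) * (MΛ * MΨ) +
            (1 + ENNReal.ofReal κ * ENNReal.ofReal δ) * (Λ s (y s) (g s) * Ψ (θ s) (y s)) +
            ENNReal.ofReal δ * MΨ * ENNReal.ofReal (β * ‖g s‖ ^ p + |γ s|)) := by
        refine lintegral_mono_ae ?_
        filter_upwards [hfwd, hΛfin, ae_restrict_mem measurableSet_Icc] with s hfs hΛs hs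
        have hθ := slowdownShift_mem hν₀ hν hg hgi hs
        exact slowdownSpeed_mul_integrand_le hν₀ hν hMΛ hMΨ hs hθ.2 (hyK s hs)
          fun _ => hfs δ hδε _ hθ _ (hyK s hs) _ hΛs
    _ = _ := setLIntegral_slowdown_majorant hν₀ hg hgi hF _ _ _ (by finiteness)

end Estimate

section Limit

variable {n : ℕ} {t T p ν₀ : ℝ} {Λ : ℝ → EN n → EN n → ℝ≥0∞} {Ψ : ℝ → EN n → ℝ≥0∞}
  {y g : ℝ → EN n}

lemma tendsto_slowdownShift (hν₀ : 0 < ν₀) (hg : Measurable g) (hgi : IntegrableOn g (Icc t T))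
    {s : ℝ} (hs : s ∈ Icc t T) :
    Tendsto (fun ν => slowdownShift t T ν ν₀ g s) atTop (𝓝[Icc t T] s) := by
  have hmem : ∀ᶠ ν in atTop, slowdownShift t T ν ν₀ g s ∈
      Icc s (s + slowdownTime t T ν ν₀ g) ∩ Icc t T := by
    filter_upwards [eventually_ge_atTop ν₀] with ν hν using slowdownShift_mem hν₀ hν hg hgi hs
  refine tendsto_nhdsWithin_iff.2 ⟨?_, hmem.mono fun ν h => h.2⟩
  refine tendsto_of_tendsto_of_tendsto_of_le_of_le' tendsto_const_nhds ?_
    (hmem.mono fun ν h => h.1.1) (hmem.mono fun ν h => h.1.2)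
  simpa using (tendsto_slowdownTime hg hgi).const_add s

lemma tendsto_lintegral_slowdownShift (hν₀ : 0 < ν₀)
    (hΛm : Measurable fun q : ℝ × EN n × EN n => Λ q.1 q.2.1 q.2.2)
    (hΨm : Measurable fun q : ℝ × EN n => Ψ q.1 q.2)
    (hy : Continuous y) (hg : Measurable g) (hgi : IntegrableOn g (Icc t T))
    {K : ℝ} {MΨ : ℝ≥0} (hyK : ∀ s ∈ Icc t T, y s ∈ closedBall (0 : EN n) K)
    (hMΨ : ∀ s ∈ Icc t T, ∀ z ∈ closedBall (0 : EN n) K, Ψ s z ≤ MΨ)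
    (hΨc : ∀ z ∈ closedBall (0 : EN n) K, ContinuousOn (fun s => Ψ s z) (Icc t T))
    (hΛint : ∫⁻ s in Icc t T, Λ s (y s) (g s) ≠ ⊤) :
    Tendsto (fun ν => ∫⁻ s in Icc t T, Λ s (y s) (g s) * Ψ (slowdownShift t T ν ν₀ g s) (y s))
      atTop (𝓝 (∫⁻ s in Icc t T, Λ s (y s) (g s) * Ψ s (y s))) := by
  have hΛ : Measurable fun s => Λ s (y s) (g s) :=
    hΛm.comp (measurable_id.prodMk (hy.measurable.prodMk hg))
  refine tendsto_lintegral_filter_of_dominated_convergence (fun s => Λ s (y s) (g s) * MΨ) ?_ ?_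
    (by rw [lintegral_mul_const _ hΛ]; exact ENNReal.mul_ne_top hΛint coe_ne_top) ?_
  · filter_upwards [eventually_ge_atTop ν₀] with ν hν
    exact hΛ.mul (hΨm.comp
      ((continuous_slowdownShift hν₀ hν hg hgi).measurable.prodMk hy.measurable))
  · filter_upwards [eventually_ge_atTop ν₀] with ν hν
    filter_upwards [ae_restrict_mem measurableSet_Icc] with s hs
    exact mul_le_mul_right (hMΨ _ (slowdownShift_mem hν₀ hν hg hgi hs).2 _ (hyK s hs)) _
  · filter_upwards [ae_restrict_mem measurableSet_Icc, ae_lt_top hΛ hΛint] with s hs hΛs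
    exact ENNReal.Tendsto.const_mul (((hΨc _ (hyK s hs)) s hs).tendsto.comp
      (tendsto_slowdownShift hν₀ hg hgi hs)) (Or.inr hΛs.ne)

lemma tendsto_slowdown_bound {ι : Type*} {l : Filter ι} {δ : ι → ℝ} {C : ι → ℝ≥0∞}
    {a b c D : ℝ≥0∞} (κ : ℝ) (ha : a ≠ ⊤) (hb : b ≠ ⊤) (hD : D ≠ ⊤)
    (hδ : Tendsto δ l (𝓝 0)) (hC : Tendsto C l (𝓝 c)) :
    Tendsto (fun i => a * ENNReal.ofReal (δ i) +
      (1 + ENNReal.ofReal κ * ENNReal.ofReal (δ i)) * C i + ENNReal.ofReal (δ i) * b * D)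
      l (𝓝 c) := by
  have h0 : Tendsto (fun i => ENNReal.ofReal (δ i)) l (𝓝 0) := by
    simpa using ENNReal.tendsto_ofReal hδ
  have h1 : Tendsto (fun i => 1 + ENNReal.ofReal κ * ENNReal.ofReal (δ i)) l (𝓝 1) := by
    simpa using tendsto_const_nhds.add (ENNReal.Tendsto.const_mul h0 (Or.inr ofReal_ne_top))
  simpa using ((ENNReal.Tendsto.const_mul h0 (Or.inr ha)).add
    (ENNReal.Tendsto.mul h1 (Or.inl one_ne_zero) hC (Or.inr one_ne_top))).add
    (ENNReal.Tendsto.mul_const (ENNReal.Tendsto.mul_const h0 (Or.inr hb)) (Or.inr hD))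

end Limit

lemma lintegral_ne_top_of_mul_ne_top {α : Type*} [MeasurableSpace α] {μ : Measure α}
    {f h : α → ℝ≥0∞} {c : ℝ≥0∞} (hc0 : c ≠ 0) (hc : c ≠ ⊤) (hch : ∀ᵐ a ∂μ, c ≤ h a)
    (hfh : ∫⁻ a, f a * h a ∂μ ≠ ⊤) : ∫⁻ a, f a ∂μ ≠ ⊤ := by
  have hle : c * ∫⁻ a, f a ∂μ ≤ ∫⁻ a, f a * h a ∂μ := by
    rw [← lintegral_const_mul' c f hc]
    exact lintegral_mono_ae (hch.mono fun a ha => by rw [mul_comm]; exact mul_le_mul_right ha _)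
  exact fun htop => hfh (top_le_iff.1 (by rwa [htop, ENNReal.mul_top hc0] at hle))

section Main

variable {n : ℕ} {t T p : ℝ} {Λ : ℝ → EN n → EN n → ℝ≥0∞} {Ψ : ℝ → EN n → ℝ≥0∞}

lemma sInf_lipschitz_le_func (ht : t ≤ T) (hp : 1 ≤ p)
    (hΛm : Measurable fun q : ℝ × EN n × EN n => Λ q.1 q.2.1 q.2.2)
    (hΨm : Measurable fun q : ℝ × EN n => Ψ q.1 q.2)
    (hS : ConditionS t T p Λ)
    (hΨbd : ∀ K : ℝ, 0 < K → ∃ M : ℝ≥0, ∀ s ∈ Set.Icc t T,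
      ∀ z ∈ Metric.closedBall (0 : EN n) K, Ψ s z ≤ M)
    (hΨc : ∀ K : ℝ, 0 < K → ∀ z ∈ Metric.closedBall (0 : EN n) K,
      ContinuousOn (fun s => Ψ s z) (Set.Icc t T))
    (hΨpos : ∀ K : ℝ, 0 < K → ∃ m : ℝ, 0 < m ∧ ∀ s ∈ Set.Icc t T,
      ∀ z ∈ Metric.closedBall (0 : EN n) K, ENNReal.ofReal m ≤ Ψ s z)
    (hΛbd : ∀ K : ℝ, 0 < K → ∃ ν₀ : ℝ, 0 < ν₀ ∧ ∃ M : ℝ≥0, ∀ s ∈ Set.Icc t T,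
      ∀ z ∈ Metric.closedBall (0 : EN n) K, ∀ v ∈ Metric.closedBall (0 : EN n) ν₀,
        Λ s z v ≤ M)
    {y g : ℝ → EN n} (hy : Continuous y) (hg : Measurable g) (hW : MemW1p t T p y g) :
    sInf {c : ℝ≥0∞ | ∃ y' y'' : ℝ → EN n, MemW1p t T p y' y'' ∧
        (∃ C : ℝ≥0, LipschitzOnWith C y' (Set.Icc t T)) ∧ y' t = y t ∧
        c = Func t T Λ Ψ y' y''} ≤ Func t T Λ Ψ y g := by
  rcases eq_or_ne (Func t T Λ Ψ y g) ⊤ with hfin | hfin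
  · exact hfin ▸ le_top
  obtain ⟨K₀, hK₀⟩ := isCompact_Icc.exists_bound_of_continuousOn hy.continuousOn (s := Icc t T)
  set K := max K₀ 1
  have hK : 0 < K := zero_lt_one.trans_le (le_max_right _ _)
  have hyK : ∀ s ∈ Icc t T, y s ∈ closedBall (0 : EN n) K := fun s hs =>
    mem_closedBall_zero_iff.2 ((hK₀ s hs).trans (le_max_left _ _))
  obtain ⟨κ, β, γ, hγ, ε, hε, hfwd⟩ := hS.exists_forward_bound hK.le
  obtain ⟨ν₀, hν₀, MΛ, hMΛ⟩ := hΛbd K hK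
  obtain ⟨MΨ, hMΨ⟩ := hΨbd K hK
  obtain ⟨c, hc, hcΨ⟩ := hΨpos K hK
  have hgi := hW.integrableOn ht
  have hΛint : ∫⁻ s in Icc t T, Λ s (y s) (g s) ≠ ⊤ :=
    lintegral_ne_top_of_mul_ne_top (ofReal_pos.2 hc).ne' ofReal_ne_top
      ((ae_restrict_iff' measurableSet_Icc).2
        (Eventually.of_forall fun s hs => hcΨ s hs _ (hyK s hs)))
      hfin
  have hΛfin := ae_lt_top (hΛm.comp (measurable_id.prodMk (hy.measurable.prodMk hg))) hΛint
  have hD : ∫⁻ s in Icc t T, ENNReal.ofReal (β * ‖g s‖ ^ p + |γ s|) ≠ ⊤ := by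
    refine (Integrable.lintegral_lt_top ?_).ne
    have h := hW.2.2.2.integrable_norm_rpow'
    rw [ENNReal.toReal_ofReal (by linarith)] at h
    exact (h.const_mul β).add hγ.abs
  refine ge_of_tendsto (tendsto_slowdown_bound (a := MΛ * MΨ) (b := MΨ) κ (by finiteness)
    coe_ne_top hD (tendsto_slowdownTime (ν₀ := ν₀) hg hgi)
    (tendsto_lintegral_slowdownShift hν₀ hΛm hΨm hy hg hgi hyK hMΨ (hΨc K hK) hΛint)) ?_
  filter_upwards [eventually_ge_atTop ν₀,
    (tendsto_slowdownTime hg hgi).eventually (eventually_le_nhds hε)] with ν hν hδ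
  obtain ⟨z, z', hz, hzL, hzt, hF⟩ := exists_lipschitz_func_le ht hΛm hΨm hy hg hW hyK hfwd hν₀ hMΛ
    hMΨ hΛfin hν hδ
  refine le_trans (sInf_le ?_) hF
  exact ⟨z, z', hz, hzL, hzt, rfl⟩

end Main

theorem nonoccurrence_phenomenon_one_endpoint_general {n : ℕ} (t T : ℝ) (ht : t < T)
    (p : ℝ) (hp : 1 ≤ p)
    (Λ : ℝ → EN n → EN n → ℝ≥0∞) (Ψ : ℝ → EN n → ℝ≥0∞)
    (hΛm : Measurable fun q : ℝ × EN n × EN n => Λ q.1 q.2.1 q.2.2)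
    (hΨm : Measurable fun q : ℝ × EN n => Ψ q.1 q.2)
    (hS : ConditionS t T p Λ)
    -- (B_Ψ): for every `K > 0`, `Ψ` is bounded on `I × B_K`
    (hΨbd : ∀ K : ℝ, 0 < K → ∃ M : ℝ≥0, ∀ s ∈ Set.Icc t T,
      ∀ z ∈ Metric.closedBall (0 : EN n) K, Ψ s z ≤ M)
    -- (C_Ψ): for every `K > 0` and `z ∈ B_K`, `Ψ(·,z)` is continuous on `I`
    (hΨc : ∀ K : ℝ, 0 < K → ∀ z ∈ Metric.closedBall (0 : EN n) K,
      ContinuousOn (fun s => Ψ s z) (Set.Icc t T))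
    -- (P_Ψ): for every `K > 0` there is `m_{K,Ψ} > 0` with `Ψ ≥ m_{K,Ψ}` on `I × B_K`
    (hΨpos : ∀ K : ℝ, 0 < K → ∃ m : ℝ, 0 < m ∧ ∀ s ∈ Set.Icc t T,
      ∀ z ∈ Metric.closedBall (0 : EN n) K, ENNReal.ofReal m ≤ Ψ s z)
    -- (B_Λ): for every `K > 0` there is `ν₀ > 0` with `Λ` bounded on `I × B_K × B_{ν₀}`
    (hΛbd : ∀ K : ℝ, 0 < K → ∃ ν₀ : ℝ, 0 < ν₀ ∧ ∃ M : ℝ≥0, ∀ s ∈ Set.Icc t T,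
      ∀ z ∈ Metric.closedBall (0 : EN n) K, ∀ v ∈ Metric.closedBall (0 : EN n) ν₀,
        Λ s z v ≤ M)
    (X : EN n) :
    sInf {c : ℝ≥0∞ | ∃ y y' : ℝ → EN n, MemW1p t T p y y' ∧ y t = X ∧
        c = Func t T Λ Ψ y y'} =
    sInf {c : ℝ≥0∞ | ∃ y y' : ℝ → EN n, MemW1p t T p y y' ∧
        (∃ C : ℝ≥0, LipschitzOnWith C y (Set.Icc t T)) ∧ y t = X ∧
        c = Func t T Λ Ψ y y'} := by
  refine le_antisymm (sInf_le_sInf fun c ⟨y, y', hW, _, hyt, hc⟩ => ⟨y, y', hW, hyt, hc⟩) ?_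
  refine le_sInf fun c ⟨y, y', hW, hyt, hc⟩ => ?_
  obtain ⟨y₁, g, hy₁, hg, hW₁, hy₁t, hF⟩ := hW.exists_continuous_measurable ht.le Λ Ψ
  rw [hc, ← hF, ← hyt, ← hy₁t]
  exact sInf_lipschitz_le_func ht.le hp hΛm hΨm hS hΨbd hΨc hΨpos hΛbd hy₁ hg hW₁

/-- **Corollary 3.2, Claim 1** (non-occurrence of the Lavrentiev phenomenon for the one
end point problem ($\mathcal P_X$)). -/
theorem nonoccurrence_phenomenon_one_endpoint {n : ℕ} (hn : 1 ≤ n) (t T : ℝ) (ht : t < T)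
    (p : ℝ) (hp : 1 ≤ p)
    (Λ : ℝ → EN n → EN n → ℝ≥0∞) (Ψ : ℝ → EN n → ℝ≥0∞)
    (hΛm : Measurable fun q : ℝ × EN n × EN n => Λ q.1 q.2.1 q.2.2)
    (hΨm : Measurable fun q : ℝ × EN n => Ψ q.1 q.2)
    (hS : ConditionS t T p Λ)
    -- (B_Ψ): for every `K > 0`, `Ψ` is bounded on `I × B_K`
    (hΨbd : ∀ K : ℝ, 0 < K → ∃ M : ℝ≥0, ∀ s ∈ Set.Icc t T,
      ∀ z ∈ Metric.closedBall (0 : EN n) K, Ψ s z ≤ M)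
    -- (C_Ψ): for every `K > 0` and `z ∈ B_K`, `Ψ(·,z)` is continuous on `I`
    (hΨc : ∀ K : ℝ, 0 < K → ∀ z ∈ Metric.closedBall (0 : EN n) K,
      ContinuousOn (fun s => Ψ s z) (Set.Icc t T))
    -- (P_Ψ): for every `K > 0` there is `m_{K,Ψ} > 0` with `Ψ ≥ m_{K,Ψ}` on `I × B_K`
    (hΨpos : ∀ K : ℝ, 0 < K → ∃ m : ℝ, 0 < m ∧ ∀ s ∈ Set.Icc t T,
      ∀ z ∈ Metric.closedBall (0 : EN n) K, ENNReal.ofReal m ≤ Ψ s z)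
    -- (B_Λ): for every `K > 0` there is `ν₀ > 0` with `Λ` bounded on `I × B_K × B_{ν₀}`
    (hΛbd : ∀ K : ℝ, 0 < K → ∃ ν₀ : ℝ, 0 < ν₀ ∧ ∃ M : ℝ≥0, ∀ s ∈ Set.Icc t T,
      ∀ z ∈ Metric.closedBall (0 : EN n) K, ∀ v ∈ Metric.closedBall (0 : EN n) ν₀,
        Λ s z v ≤ M)
    (X : EN n) :
    sInf {c : ℝ≥0∞ | ∃ y y' : ℝ → EN n, MemW1p t T p y y' ∧ y t = X ∧
        c = Func t T Λ Ψ y y'} =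
    sInf {c : ℝ≥0∞ | ∃ y y' : ℝ → EN n, MemW1p t T p y y' ∧
        (∃ C : ℝ≥0, LipschitzOnWith C y (Set.Icc t T)) ∧ y t = X ∧
        c = Func t T Λ Ψ y y'} :=
  nonoccurrence_phenomenon_one_endpoint_general t T ht p hp Λ Ψ hΛm hΨm hS hΨbd hΨc hΨpos hΛbd X
end
end

section
/- (Manià's example: non-occurrence of the Lavrentiev gap with only the final end point condition.) Let F(z) = ∫_0^1 (z(s)³ − s)²·(z'(s))⁶ ds and y(s) = s^{1/3}. For each integer h ≥ 1 define y_h(s) = h^{−1/3} for s ∈ [0, 1/h] and y_h(s) = s^{1/3} for s ∈ (1/h, 1]. Then each y_h is Lipschitz on [0,1], y_h(1) = 1 = y(1), F(y_h) = 0 = F(y) for every h, and y_h → y in W^{1,1}([0,1]) (i.e. y_h → y uniformly and y_h' → y' in L¹). In particular inf{ F(z) : z Lipschitz on [0,1], z(1)=1 } = 0, so the Lavrentiev phenomenon does not occur for the problem with the single end point condition z(1)=1. -/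
open MeasureTheory Set Filter ENNReal NNReal

noncomputable section

/-- `z` belongs to `W^{1,1}([0,1];ℝ)` with derivative `z'`. -/
def MemW11 (z z' : ℝ → ℝ) : Prop :=
  IntervalIntegrable z' volume 0 1 ∧
  ∀ x ∈ Set.Icc (0:ℝ) 1, z x = z 0 + ∫ s in (0:ℝ)..x, z' s

/-- The Manià functional `F(z) = ∫_0^1 (z³ − s)² (z')⁶ ds`. -/
def ManiaF (z z' : ℝ → ℝ) : ℝ≥0∞ :=
  ∫⁻ s in Set.Icc (0:ℝ) 1, ENNReal.ofReal ((z s ^ 3 - s) ^ 2 * z' s ^ 6)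

/-- The truncated functions `y_h`. -/
def maniaYh (h : ℕ) (s : ℝ) : ℝ :=
  if s ≤ 1 / (h : ℝ) then (h : ℝ) ^ (-(1:ℝ)/3) else s ^ ((1:ℝ)/3)

/-- The (a.e.) derivatives of the truncated functions `y_h`. -/
def maniaYh' (h : ℕ) (s : ℝ) : ℝ :=
  if s ≤ 1 / (h : ℝ) then 0 else (1/3) * s ^ (-(2:ℝ)/3)

/-!
`y_h` freezes the cube root `y` at its value `h^{-1/3}` on `[0, 1/h]`. On each piece either
`y_h' = 0` or `y_h³ = s`, so the integrand of `F` vanishes identically and `F(y_h) = 0`; likewise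
`F(y) = 0`. Both `sup |y_h - y|` and `‖y_h' - y'‖_{L¹}` equal `h^{-1/3} → 0`, and `y_h` is
Lipschitz because `|y_h'| ≤ h`.
-/

lemma one_div_natCast_rpow_third (h : ℕ) :
    (1 / (h : ℝ)) ^ ((1:ℝ)/3) = (h : ℝ) ^ (-(1:ℝ)/3) := by
  rw [one_div, Real.inv_rpow h.cast_nonneg, neg_div, Real.rpow_neg h.cast_nonneg]

lemma rpow_third_pow_three {s : ℝ} (hs : 0 ≤ s) : (s ^ ((1:ℝ)/3)) ^ 3 = s := by
  rw [← Real.rpow_natCast, ← Real.rpow_mul hs]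
  norm_num

lemma integral_cbrt_deriv (a b : ℝ) :
    ∫ s in a..b, (1/3) * s ^ (-(2:ℝ)/3) = b ^ ((1:ℝ)/3) - a ^ ((1:ℝ)/3) := by
  rw [intervalIntegral.integral_const_mul, integral_rpow (Or.inl (by norm_num))]
  norm_num
  field_simp

lemma tendsto_natCast_rpow_neg_third :
    Tendsto (fun h : ℕ => (h : ℝ) ^ (-(1:ℝ)/3)) atTop (nhds 0) := by
  simpa only [neg_div, Function.comp_def] using
    (tendsto_rpow_neg_atTop (by norm_num : (0:ℝ) < 1/3)).comp tendsto_natCast_atTop_atTop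

lemma maniaF_eq_zero {z z' : ℝ → ℝ} (H : ∀ s ∈ Icc (0:ℝ) 1, z s ^ 3 = s ∨ z' s = 0) :
    ManiaF z z' = 0 := by
  rw [ManiaF, ← lintegral_zero (μ := volume.restrict (Icc (0:ℝ) 1))]
  refine setLIntegral_congr_fun measurableSet_Icc fun s hs => ?_
  rcases H s hs with h | h <;> simp [h]

lemma MemW11.lipschitzOnWith {z z' : ℝ → ℝ} (hz : MemW11 z z') {C : ℝ≥0}
    (hC : ∀ s ∈ Icc (0:ℝ) 1, |z' s| ≤ C) : LipschitzOnWith C z (Icc 0 1) := by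
  refine LipschitzOnWith.of_dist_le_mul fun x hx y hy => ?_
  have hint : ∀ {a}, a ∈ Icc (0:ℝ) 1 → IntervalIntegrable z' volume 0 a :=
    fun ha => hz.1.mono_set (by simpa using uIcc_subset_Icc (left_mem_Icc.2 zero_le_one) ha)
  have hdiff : z x - z y = ∫ s in y..x, z' s := by
    rw [hz.2 x hx, hz.2 y hy, ← intervalIntegral.integral_interval_sub_left (hint hx) (hint hy)]
    ring
  rw [Real.dist_eq, Real.dist_eq, hdiff, ← Real.norm_eq_abs]
  exact intervalIntegral.norm_integral_le_of_norm_le_const fun s hs =>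
    hC s (uIcc_subset_Icc hy hx (uIoc_subset_uIcc hs))

lemma maniaYh_one (h : ℕ) : maniaYh h 1 = 1 := by
  unfold maniaYh
  split_ifs with hle
  · obtain rfl : h = 1 := by
      rcases Nat.eq_zero_or_pos h with rfl | hpos
      · norm_num at hle
      · have : (h : ℝ) ≤ 1 := by rwa [le_div_iff₀ (by positivity), one_mul] at hle
        exact le_antisymm (by exact_mod_cast this) hpos
    norm_num
  · exact Real.one_rpow _

lemma abs_maniaYh_sub_le (h : ℕ) {s : ℝ} (hs : 0 ≤ s) :
    |maniaYh h s - s ^ ((1:ℝ)/3)| ≤ (h : ℝ) ^ (-(1:ℝ)/3) := by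
  unfold maniaYh
  split_ifs with hsh
  · have hle : s ^ ((1:ℝ)/3) ≤ (h : ℝ) ^ (-(1:ℝ)/3) :=
      one_div_natCast_rpow_third h ▸ Real.rpow_le_rpow hs hsh (by norm_num)
    rw [abs_of_nonneg (sub_nonneg.2 hle)]
    linarith [Real.rpow_nonneg hs ((1:ℝ)/3)]
  · simpa using Real.rpow_nonneg h.cast_nonneg _

lemma tendstoUniformlyOn_maniaYh :
    TendstoUniformlyOn maniaYh (fun s : ℝ => s ^ ((1:ℝ)/3)) atTop (Icc 0 1) := by
  rw [Metric.tendstoUniformlyOn_iff]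
  intro ε hε
  filter_upwards [tendsto_natCast_rpow_neg_third.eventually_lt_const hε] with h hlt s hs
  rw [dist_comm, Real.dist_eq]
  exact (abs_maniaYh_sub_le h hs.1).trans_lt hlt

lemma maniaF_maniaYh (h : ℕ) : ManiaF (maniaYh h) (maniaYh' h) = 0 :=
  maniaF_eq_zero fun s hs => by
    by_cases hsh : s ≤ 1 / h
    · exact Or.inr (if_pos hsh)
    · exact Or.inl (by rw [maniaYh, if_neg hsh, rpow_third_pow_three hs.1])

lemma abs_maniaYh'_le {h : ℕ} (hh : 0 < h) (s : ℝ) : |maniaYh' h s| ≤ h := by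
  unfold maniaYh'
  split_ifs with hsh
  · simp
  · have hinv : (0:ℝ) < 1 / h := by positivity
    have hs : 1 / (h : ℝ) < s := not_le.1 hsh
    calc |1 / 3 * s ^ (-(2:ℝ)/3)| = 1 / 3 * s ^ (-(2:ℝ)/3) :=
          abs_of_nonneg (by positivity [(hinv.trans hs).le])
      _ ≤ 1 / 3 * (1 / (h : ℝ)) ^ (-(2:ℝ)/3) := by
          gcongr 1 / 3 * ?_
          exact Real.rpow_le_rpow_of_nonpos hinv hs.le (by norm_num)
      _ = 1 / 3 * (h : ℝ) ^ ((2:ℝ)/3) := by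
          rw [one_div (h : ℝ), Real.inv_rpow h.cast_nonneg, ← Real.rpow_neg h.cast_nonneg]
          norm_num
      _ ≤ 1 / 3 * (h : ℝ) ^ (1:ℝ) := by
          gcongr
          · exact_mod_cast hh
          · norm_num
      _ ≤ h := by rw [Real.rpow_one]; linarith [h.cast_nonneg (α := ℝ)]

lemma measurable_maniaYh' (h : ℕ) : Measurable (maniaYh' h) :=
  Measurable.ite measurableSet_Iic measurable_const (by fun_prop)

lemma intervalIntegrable_maniaYh' {h : ℕ} (hh : 0 < h) (a b : ℝ) :
    IntervalIntegrable (maniaYh' h) volume a b := by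
  refine (intervalIntegrable_const (c := (h : ℝ))).mono_fun
    (measurable_maniaYh' h).aestronglyMeasurable (Eventually.of_forall fun s => ?_)
  simpa using abs_maniaYh'_le hh s

lemma integral_maniaYh' {h : ℕ} (hh : 0 < h) {x : ℝ} (hx : 0 ≤ x) :
    ∫ s in (0:ℝ)..x, maniaYh' h s = maniaYh h x - maniaYh h 0 := by
  have hinv : (0:ℝ) ≤ 1 / h := by positivity
  have hflat : ∀ c ≤ 1 / (h : ℝ), 0 ≤ c → ∫ s in (0:ℝ)..c, maniaYh' h s = 0 :=
    fun c hc hc0 => intervalIntegral.integral_zero_ae <| Eventually.of_forall fun s hs =>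
      if_pos ((uIoc_of_le hc0 ▸ hs).2.trans hc)
  have hy0 : maniaYh h 0 = (h : ℝ) ^ (-(1:ℝ)/3) := if_pos hinv
  by_cases hxh : x ≤ 1 / h
  · rw [hflat x hxh hx, hy0, maniaYh, if_pos hxh, sub_self]
  · have hcbrt : ∫ s in (1 / (h : ℝ))..x, maniaYh' h s
        = ∫ s in (1 / (h : ℝ))..x, (1/3) * s ^ (-(2:ℝ)/3) :=
      intervalIntegral.integral_congr_ae <| Eventually.of_forall fun s hs =>
        if_neg (not_le.2 (uIoc_of_le (not_le.1 hxh).le ▸ hs).1)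
    rw [← intervalIntegral.integral_add_adjacent_intervals
      (intervalIntegrable_maniaYh' hh 0 (1 / h)) (intervalIntegrable_maniaYh' hh _ x),
      hflat _ le_rfl hinv, zero_add, hcbrt,
      integral_cbrt_deriv, one_div_natCast_rpow_third, hy0, maniaYh, if_neg hxh]

lemma memW11_maniaYh {h : ℕ} (hh : 0 < h) : MemW11 (maniaYh h) (maniaYh' h) :=
  ⟨intervalIntegrable_maniaYh' hh 0 1, fun x hx => by
    rw [integral_maniaYh' hh hx.1, add_sub_cancel]⟩

lemma lipschitzOnWith_maniaYh {h : ℕ} (hh : 0 < h) : LipschitzOnWith h (maniaYh h) (Icc 0 1) :=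
  (memW11_maniaYh hh).lipschitzOnWith fun s _ => by simpa using abs_maniaYh'_le hh s

lemma integral_abs_maniaYh'_sub {h : ℕ} (hh : 0 < h) :
    ∫ s in Icc (0:ℝ) 1, |maniaYh' h s - (1/3) * s ^ (-(2:ℝ)/3)|
      = (h : ℝ) ^ (-(1:ℝ)/3) := by
  have hinv : 1 / (h : ℝ) ≤ 1 := by
    rw [div_le_one (by positivity)]; exact_mod_cast hh
  have hgap : EqOn (fun s => |maniaYh' h s - (1/3) * s ^ (-(2:ℝ)/3)|)
      ((Icc 0 (1 / (h : ℝ))).indicator fun s => (1/3) * s ^ (-(2:ℝ)/3)) (Icc 0 1) := by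
    intro s hs
    dsimp only
    by_cases hsh : s ≤ 1 / h
    · rw [indicator_of_mem (show s ∈ Icc 0 (1 / (h : ℝ)) from ⟨hs.1, hsh⟩), maniaYh',
        if_pos hsh, zero_sub, abs_neg, abs_of_nonneg (by positivity [hs.1])]
    · rw [indicator_of_notMem (show s ∉ Icc 0 (1 / (h : ℝ)) from fun hmem => hsh hmem.2),
        maniaYh', if_neg hsh, sub_self, abs_zero]
  rw [setIntegral_congr_fun measurableSet_Icc hgap, setIntegral_indicator measurableSet_Icc,
    Icc_inter_Icc, max_self, min_eq_right hinv, integral_Icc_eq_integral_Ioc,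
    ← intervalIntegral.integral_of_le (by positivity), integral_cbrt_deriv,
    Real.zero_rpow (by norm_num), sub_zero, one_div_natCast_rpow_third]

/-- **Manià's example: non-occurrence of the Lavrentiev gap with only the final end
point condition `z(1) = 1`.** -/
theorem mania_no_gap_final_condition :
    (∀ h : ℕ, 1 ≤ h → ∃ C : ℝ≥0, LipschitzOnWith C (maniaYh h) (Set.Icc 0 1)) ∧
    (∀ h : ℕ, 1 ≤ h → MemW11 (maniaYh h) (maniaYh' h)) ∧
    (∀ h : ℕ, 1 ≤ h → maniaYh h 1 = 1 ∧ (1:ℝ) ^ ((1:ℝ)/3) = 1) ∧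
    (∀ h : ℕ, 1 ≤ h → ManiaF (maniaYh h) (maniaYh' h) = 0 ∧
      ManiaF (fun s : ℝ => s ^ ((1:ℝ)/3)) (fun s : ℝ => (1/3) * s ^ (-(2:ℝ)/3)) = 0) ∧
    -- uniform convergence `y_h → y` on `[0,1]`
    TendstoUniformlyOn (fun h s => maniaYh h s) (fun s : ℝ => s ^ ((1:ℝ)/3))
      atTop (Set.Icc 0 1) ∧
    -- convergence of the derivatives in `L¹([0,1])`
    Tendsto (fun h => ∫ s in Set.Icc (0:ℝ) 1,
      |maniaYh' h s - (1/3) * s ^ (-(2:ℝ)/3)|) atTop (nhds 0) ∧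
    -- non-occurrence of the Lavrentiev phenomenon for the single end point problem
    sInf {c : ℝ≥0∞ | ∃ z z' : ℝ → ℝ, MemW11 z z' ∧
      (∃ C : ℝ≥0, LipschitzOnWith C z (Set.Icc 0 1)) ∧ z 1 = 1 ∧ c = ManiaF z z'} = 0 := by
  refine ⟨fun h hh => ⟨h, lipschitzOnWith_maniaYh hh⟩, fun h hh => memW11_maniaYh hh,
    fun h _ => ⟨maniaYh_one h, Real.one_rpow _⟩,
    fun h _ => ⟨maniaF_maniaYh h,
      maniaF_eq_zero fun s hs => Or.inl (rpow_third_pow_three hs.1)⟩,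
    tendstoUniformlyOn_maniaYh, ?_, ?_⟩
  · refine tendsto_natCast_rpow_neg_third.congr' ?_
    filter_upwards [eventually_gt_atTop 0] with h hh
    exact (integral_abs_maniaYh'_sub hh).symm
  · exact nonpos_iff_eq_zero.1 <| sInf_le ⟨maniaYh 1, maniaYh' 1, memW11_maniaYh one_pos,
      ⟨_, lipschitzOnWith_maniaYh one_pos⟩, maniaYh_one 1, (maniaF_maniaYh 1).symm⟩
end
end

section
/- (Manià's example: occurrence of the Lavrentiev phenomenon with both end point conditions.) Let F(z) = ∫_0^1 (z(s)³ − s)²·(z'(s))⁶ ds. There exists ε > 0 such that F(z) ≥ ε for every Lipschitz function z : [0,1] → ℝ with z(0)=0 and z(1)=1. Hence 0 = min{ F(z) : z ∈ W^{1,1}([0,1]), z(0)=0, z(1)=1 } < inf{ F(z) : z Lipschitz on [0,1], z(0)=0, z(1)=1 }. -/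
/-!
The minimiser is `s^{1/3}`, on whose graph the integrand vanishes. A Lipschitz `z` with
`z(0) = 0` stays below `s^{1/3}/2` near `0` and must reach it before `s = 1`; let `b = B³` be the
first time it does. On `(b/2, b)` the weight `(z³ - s)²` is at least `(7b/16)²`, while `z` rises
by at least `B/10`, so Jensen gives `∫ z'⁶ ≥ (B/10)⁶ / (b/2)⁵`. The product is
`49 / (8000000 B³) ≥ 49 / 8000000`.
-/

open MeasureTheory Set Filter ENNReal NNReal

noncomputable section

lemma ofReal_integral_le_lintegral_ofReal {α : Type*} [MeasurableSpace α] {μ : Measure α}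
    {f : α → ℝ} (hf : Integrable f μ) :
    ENNReal.ofReal (∫ x, f x ∂μ) ≤ ∫⁻ x, ENNReal.ofReal (f x) ∂μ :=
  calc ENNReal.ofReal (∫ x, f x ∂μ) ≤ ENNReal.ofReal (∫ x, max (f x) 0 ∂μ) :=
        ENNReal.ofReal_le_ofReal (integral_mono hf hf.pos_part fun x => le_max_left _ _)
    _ = ∫⁻ x, ENNReal.ofReal (max (f x) 0) ∂μ :=
        ofReal_integral_eq_lintegral_ofReal hf.pos_part (ae_of_all _ fun x => le_max_right _ _)
    _ = ∫⁻ x, ENNReal.ofReal (f x) ∂μ := by simp [ENNReal.ofReal_max]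

lemma pow_add_mul_sub_le_abs_pow {m : ℝ} (hm : 0 ≤ m) (x : ℝ) (n : ℕ) :
    m ^ n + n * m ^ (n - 1) * (x - m) ≤ |x| ^ n :=
  calc m ^ n + n * m ^ (n - 1) * (x - m) ≤ m ^ n + n * m ^ (n - 1) * (|x| - m) := by
        gcongr; exact le_abs_self x
    _ ≤ (m + (|x| - m)) ^ n := pow_add_mul_le_add_pow hm (by linarith [abs_nonneg x]) n
    _ = |x| ^ n := by rw [add_sub_cancel]

lemma intervalIntegral_pow_div_le_lintegral_abs_pow {f : ℝ → ℝ} {a b : ℝ} (hab : a < b)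
    (hf : IntervalIntegrable f volume a b) (hpos : 0 ≤ ∫ s in a..b, f s) {n : ℕ} (hn : n ≠ 0) :
    ENNReal.ofReal ((∫ s in a..b, f s) ^ n / (b - a) ^ (n - 1)) ≤
      ∫⁻ s in Ioo a b, ENNReal.ofReal (|f s| ^ n) := by
  set I := ∫ s in a..b, f s
  have hba : 0 < b - a := sub_pos.mpr hab
  set m := I / (b - a)
  have hfi : IntegrableOn f (Ioo a b) := hf.1.mono_set Ioo_subset_Ioc_self
  have hI : ∫ s in Ioo a b, f s = I := by
    simp only [I, intervalIntegral.integral_of_le hab.le, integral_Ioc_eq_integral_Ioo]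
  have hconst (C : ℝ) : IntegrableOn (fun _ => C) (Ioo a b) :=
    integrableOn_const measure_Ioo_lt_top.ne
  have hsub : IntegrableOn (fun s => f s - m) (Ioo a b) := hfi.sub (hconst m)
  have hlin : IntegrableOn (fun s => m ^ n + n * m ^ (n - 1) * (f s - m)) (Ioo a b) :=
    (hconst _).add (hsub.const_mul _)
  have htangent : ∫ s in Ioo a b, (m ^ n + n * m ^ (n - 1) * (f s - m)) =
      I ^ n / (b - a) ^ (n - 1) := by
    rw [integral_add (hconst _) (hsub.const_mul _),
      integral_const_mul, integral_sub hfi (hconst _), hI,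
      setIntegral_const, setIntegral_const, Real.volume_real_Ioo_of_le hab.le, smul_eq_mul,
      smul_eq_mul]
    obtain ⟨k, rfl⟩ := Nat.exists_eq_succ_of_ne_zero hn
    simp only [m, Nat.succ_sub_one, pow_succ, div_pow]
    field_simp
    ring
  -- integrate the tangent line of `|x| ^ n` at the mean value `m`
  calc ENNReal.ofReal (I ^ n / (b - a) ^ (n - 1))
      = ENNReal.ofReal (∫ s in Ioo a b, (m ^ n + n * m ^ (n - 1) * (f s - m))) := by
        rw [htangent]
    _ ≤ ∫⁻ s in Ioo a b, ENNReal.ofReal (m ^ n + n * m ^ (n - 1) * (f s - m)) :=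
        ofReal_integral_le_lintegral_ofReal hlin
    _ ≤ ∫⁻ s in Ioo a b, ENNReal.ofReal (|f s| ^ n) :=
        lintegral_mono fun s => ENNReal.ofReal_le_ofReal
          (pow_add_mul_sub_le_abs_pow (div_nonneg hpos hba.le) _ n)

lemma exists_first_le_of_continuousOn {f g : ℝ → ℝ} {a c : ℝ} (hac : a ≤ c)
    (hf : ContinuousOn f (Icc a c)) (hg : ContinuousOn g (Icc a c)) (hc : g c ≤ f c) :
    ∃ b ∈ Icc a c, g b ≤ f b ∧ ∀ s ∈ Ico a b, f s < g s := by
  set T := {x ∈ Icc a c | g x ≤ f x}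
  have hT : IsCompact T :=
    isCompact_Icc.of_isClosed_subset (isClosed_Icc.isClosed_le hg hf) fun x hx => hx.1
  have hbT : sInf T ∈ T := hT.sInf_mem ⟨c, ⟨hac, le_rfl⟩, hc⟩
  refine ⟨sInf T, hbT.1, hbT.2, fun s hs => lt_of_not_ge fun hgf => ?_⟩
  have : sInf T ≤ s := csInf_le hT.bddBelow ⟨⟨hs.1, hs.2.le.trans hbT.1.2⟩, hgf⟩
  exact (lt_irrefl s) (hs.2.trans_le this)

namespace MemW11

variable {z z' : ℝ → ℝ}

lemma intervalIntegrable (h : MemW11 z z') {x y : ℝ} (hx : x ∈ Icc (0:ℝ) 1)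
    (hy : y ∈ Icc (0:ℝ) 1) : IntervalIntegrable z' volume x y := by
  rw [← uIcc_of_le zero_le_one] at hx hy
  exact h.1.mono_set (uIcc_subset_uIcc hx hy)

lemma integral_eq_sub (h : MemW11 z z') {x y : ℝ} (hx : x ∈ Icc (0:ℝ) 1)
    (hy : y ∈ Icc (0:ℝ) 1) : ∫ s in x..y, z' s = z y - z x := by
  have h0 : (0:ℝ) ∈ Icc (0:ℝ) 1 := left_mem_Icc.mpr zero_le_one
  rw [h.2 y hy, h.2 x hx, ← intervalIntegral.integral_interval_sub_left
    (h.intervalIntegrable h0 hy) (h.intervalIntegrable h0 hx)]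
  ring

end MemW11

lemma cube_le_of_lipschitzOnWith {z : ℝ → ℝ} {C : ℝ≥0} (hz : LipschitzOnWith C z (Icc 0 1))
    (h0 : z 0 = 0) {s : ℝ} (hs : s ∈ Icc (0:ℝ) 1) : z s ^ 3 ≤ C ^ 3 * s ^ 3 := by
  have h := hz.dist_le_mul s hs 0 (left_mem_Icc.mpr zero_le_one)
  rw [Real.dist_eq, Real.dist_eq, h0, sub_zero, sub_zero, abs_of_nonneg hs.1] at h
  calc z s ^ 3 ≤ |z s| ^ 3 := by
        rw [← abs_pow]; exact le_abs_self _
    _ ≤ (C * s) ^ 3 := by gcongr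
    _ = C ^ 3 * s ^ 3 := by ring

/-- `8 z³ ≤ s` is `z ≤ s^{1/3} / 2`, written without cube roots. -/
lemma exists_first_cube_crossing {z : ℝ → ℝ} {C : ℝ≥0} (hz : LipschitzOnWith C z (Icc 0 1))
    (h0 : z 0 = 0) (h1 : z 1 = 1) :
    ∃ b ∈ Ioc (0:ℝ) 1, b ≤ 8 * z b ^ 3 ∧ ∀ s ∈ Ioo 0 b, 8 * z s ^ 3 ≤ s := by
  set s₀ : ℝ := 1 / (8 * C ^ 3 + 1)
  have hs₀ : 0 < s₀ := by positivity
  have hs₀1 : s₀ ≤ 1 :=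
    div_le_one_of_le₀ (by linarith [pow_nonneg C.coe_nonneg 3]) (by positivity)
  have hnear : ∀ s ∈ Icc 0 s₀, 8 * z s ^ 3 ≤ s := by
    intro s hs
    have hCs : 8 * C ^ 3 * s ≤ 1 := by
      have := hs.2
      rw [le_div_iff₀ (by positivity)] at this
      nlinarith [hs.1]
    have hs1 : s ≤ 1 := hs.2.trans hs₀1
    calc 8 * z s ^ 3 ≤ 8 * (C ^ 3 * s ^ 3) := by
          gcongr; exact cube_le_of_lipschitzOnWith hz h0 ⟨hs.1, hs1⟩
      _ = (8 * C ^ 3 * s) * s ^ 2 := by ring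
      _ ≤ s := by nlinarith [hs.1, mul_nonneg hs.1 hs.1]
  have hcont : ContinuousOn (fun s => 8 * z s ^ 3) (Icc s₀ 1) :=
    ((hz.continuousOn.mono (Icc_subset_Icc_left hs₀.le)).pow 3).const_smul (8:ℝ)
  obtain ⟨b, hb, hbz, hbefore⟩ := exists_first_le_of_continuousOn hs₀1 hcont
    continuousOn_id (by simp [h1])
  refine ⟨b, ⟨hs₀.trans_le hb.1, hb.2⟩, hbz, fun s hs => ?_⟩
  rcases le_or_gt s s₀ with hss | hss
  · exact hnear s ⟨hs.1.le, hss⟩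
  · exact (hbefore s ⟨hss.le, hs.2⟩).le

lemma div_ten_le_sub_of_cube_le {B u v : ℝ} (hB : 0 < B) (hu : B ^ 3 ≤ 8 * u ^ 3)
    (hv : 8 * v ^ 3 ≤ B ^ 3 / 2) : B / 10 ≤ u - v := by
  have hcube_mono (x y : ℝ) : x ^ 3 ≤ y ^ 3 ↔ x ≤ y := Odd.pow_le_pow (by decide)
  have hu' : B / 2 ≤ u := (hcube_mono _ _).mp (by linarith)
  have hv' : v ≤ 2 * B / 5 := (hcube_mono _ _).mp (by nlinarith [pow_pos hB 3])
  linarith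

lemma mania_constant_le {B I : ℝ} (hB0 : 0 < B) (hB1 : B ≤ 1) (hI : B / 10 ≤ I) :
    49 / 8000000 ≤ (7 * B ^ 3 / 16) ^ 2 * (I ^ 6 / (B ^ 3 - B ^ 3 / 2) ^ (6 - 1)) := by
  rw [mul_div_assoc', le_div_iff₀ (pow_pos (by linarith [pow_pos hB0 3]) _)]
  calc 49 / 8000000 * (B ^ 3 - B ^ 3 / 2) ^ (6 - 1)
      = (7 * B ^ 3 / 16) ^ 2 * (B / 10) ^ 6 * B ^ 3 := by ring
    _ ≤ (7 * B ^ 3 / 16) ^ 2 * (B / 10) ^ 6 := by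
        have := pow_le_one₀ hB0.le hB1 (n := 3)
        have : 0 ≤ (7 * B ^ 3 / 16) ^ 2 * (B / 10) ^ 6 := by positivity
        nlinarith
    _ ≤ (7 * B ^ 3 / 16) ^ 2 * I ^ 6 := by gcongr

lemma ofReal_le_maniaF_of_lipschitzOnWith {z z' : ℝ → ℝ} {C : ℝ≥0} (hW : MemW11 z z')
    (hz : LipschitzOnWith C z (Icc 0 1)) (h0 : z 0 = 0) (h1 : z 1 = 1) :
    ENNReal.ofReal (49 / 8000000) ≤ ManiaF z z' := by
  obtain ⟨b, hb, hbz, hbelow⟩ := exists_first_cube_crossing hz h0 h1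
  set B := b ^ ((3:ℕ)⁻¹ : ℝ)
  have hB3 : B ^ 3 = b := Real.rpow_inv_natCast_pow hb.1.le three_ne_zero
  have hB0 : 0 < B := Real.rpow_pos_of_pos hb.1 _
  have hB1 : B ≤ 1 := Real.rpow_le_one hb.1.le hb.2 (by positivity)
  have hhalf : b / 2 ∈ Icc (0:ℝ) 1 := ⟨by linarith [hb.1], by linarith [hb.2]⟩
  have hb' : b ∈ Icc (0:ℝ) 1 := Ioc_subset_Icc_self hb
  have hrise : B / 10 ≤ ∫ s in (b / 2)..b, z' s := by
    rw [hW.integral_eq_sub hhalf hb']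
    refine div_ten_le_sub_of_cube_le hB0 (hB3 ▸ hbz) ?_
    linarith [hbelow (b / 2) ⟨by linarith [hb.1], by linarith [hb.1]⟩]
  have hweight : ∀ s ∈ Ioo (b / 2) b, (7 * b / 16) ^ 2 ≤ (z s ^ 3 - s) ^ 2 := by
    intro s hs
    have := hbelow s ⟨by linarith [hb.1, hs.1], hs.2⟩
    nlinarith [hs.1, hb.1]
  have hjensen := intervalIntegral_pow_div_le_lintegral_abs_pow (by linarith [hb.1])
    (hW.intervalIntegrable hhalf hb') (by linarith) (n := 6) (by norm_num)
  set I := ∫ s in (b / 2)..b, z' s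
  have harith : 49 / 8000000 ≤ (7 * b / 16) ^ 2 * (I ^ 6 / (b - b / 2) ^ (6 - 1)) :=
    hB3 ▸ mania_constant_le hB0 hB1 hrise
  calc ENNReal.ofReal (49 / 8000000)
      ≤ ENNReal.ofReal ((7 * b / 16) ^ 2) *
          ENNReal.ofReal (I ^ 6 / (b - b / 2) ^ (6 - 1)) := by
        rw [← ENNReal.ofReal_mul (by positivity)]
        exact ENNReal.ofReal_le_ofReal harith
    _ ≤ ENNReal.ofReal ((7 * b / 16) ^ 2) *
          ∫⁻ s in Ioo (b / 2) b, ENNReal.ofReal (|z' s| ^ 6) := by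
        gcongr
    _ = ∫⁻ s in Ioo (b / 2) b, ENNReal.ofReal ((7 * b / 16) ^ 2) * ENNReal.ofReal (|z' s| ^ 6) :=
        (lintegral_const_mul' _ _ ENNReal.ofReal_ne_top).symm
    _ ≤ ∫⁻ s in Ioo (b / 2) b, ENNReal.ofReal ((z s ^ 3 - s) ^ 2 * z' s ^ 6) := by
        refine setLIntegral_mono' measurableSet_Ioo fun s hs => ?_
        rw [← ENNReal.ofReal_mul (by positivity), (by decide : Even 6).pow_abs]
        exact ENNReal.ofReal_le_ofReal (mul_le_mul_of_nonneg_right (hweight s hs) (by positivity))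
    _ ≤ ManiaF z z' :=
        lintegral_mono_set fun s hs => ⟨by linarith [hs.1, hb.1], by linarith [hs.2, hb.2]⟩

lemma memW11_rpow_one_third :
    MemW11 (fun s => s ^ (1 / 3 : ℝ)) (fun s => 1 / 3 * s ^ (-2 / 3 : ℝ)) := by
  refine ⟨(intervalIntegral.intervalIntegrable_rpow' (by norm_num)).const_mul _, fun x _ => ?_⟩
  beta_reduce
  rw [intervalIntegral.integral_const_mul, integral_rpow (Or.inl (by norm_num)),
    Real.zero_rpow (by norm_num), Real.zero_rpow (by norm_num)]
  norm_num
  ring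

lemma maniaF_rpow_one_third :
    ManiaF (fun s => s ^ (1 / 3 : ℝ)) (fun s => 1 / 3 * s ^ (-2 / 3 : ℝ)) = 0 := by
  refine (setLIntegral_congr_fun measurableSet_Icc fun s hs => ?_).trans lintegral_zero
  beta_reduce
  rw [← Real.rpow_natCast (s ^ _) 3, ← Real.rpow_mul hs.1]
  norm_num

/-- **Manià's example: occurrence of the Lavrentiev phenomenon with both end point
conditions `z(0)=0`, `z(1)=1`.** -/
theorem mania_lavrentiev_phenomenon :
    (∃ ε : ℝ, 0 < ε ∧ ∀ z z' : ℝ → ℝ, MemW11 z z' →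
      (∃ C : ℝ≥0, LipschitzOnWith C z (Set.Icc 0 1)) → z 0 = 0 → z 1 = 1 →
      ENNReal.ofReal ε ≤ ManiaF z z') ∧
    -- the minimum over `W^{1,1}` is `0` and it is attained
    (0 : ℝ≥0∞) ∈ {c : ℝ≥0∞ | ∃ z z' : ℝ → ℝ, MemW11 z z' ∧ z 0 = 0 ∧ z 1 = 1 ∧
      c = ManiaF z z'} ∧
    sInf {c : ℝ≥0∞ | ∃ z z' : ℝ → ℝ, MemW11 z z' ∧ z 0 = 0 ∧ z 1 = 1 ∧
      c = ManiaF z z'} = 0 ∧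
    -- the infimum over Lipschitz functions is strictly positive
    0 < sInf {c : ℝ≥0∞ | ∃ z z' : ℝ → ℝ, MemW11 z z' ∧
      (∃ C : ℝ≥0, LipschitzOnWith C z (Set.Icc 0 1)) ∧ z 0 = 0 ∧ z 1 = 1 ∧
      c = ManiaF z z'} := by
  have hzero_mem : (0 : ℝ≥0∞) ∈ {c : ℝ≥0∞ | ∃ z z' : ℝ → ℝ, MemW11 z z' ∧ z 0 = 0 ∧ z 1 = 1 ∧
      c = ManiaF z z'} :=
    ⟨_, _, memW11_rpow_one_third, Real.zero_rpow (by norm_num), Real.one_rpow _,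
      maniaF_rpow_one_third.symm⟩
  refine ⟨⟨49 / 8000000, by norm_num, fun z z' hW ⟨C, hz⟩ h0 h1 =>
      ofReal_le_maniaF_of_lipschitzOnWith hW hz h0 h1⟩,
    hzero_mem, nonpos_iff_eq_zero.mp (sInf_le hzero_mem), ?_⟩
  refine (ENNReal.ofReal_pos.mpr (by norm_num : (0:ℝ) < 49 / 8000000)).trans_le (le_sInf ?_)
  rintro _ ⟨z, z', hW, ⟨C, hz⟩, h0, h1, rfl⟩
  exact ofReal_le_maniaF_of_lipschitzOnWith hW hz h0 h1
end
end

section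
/- (Manià's example: occurrence of the Lavrentiev gap at y for the initial-datum problem.) Let F(z) = ∫_0^1 (z(s)³ − s)²·(z'(s))⁶ ds. There exists η > 0 such that F(z) ≥ η for every Lipschitz function z : [0,1] → ℝ with z(0) = 0 and z(1) ∈ [3/4, 3/2]. Consequently, for y(s) = s^{1/3}, every sequence (y_h) of Lipschitz functions with y_h(0)=0 converging to y in W^{1,1}([0,1]) satisfies liminf_{h→∞} F(y_h) ≥ η > 0 = F(y); i.e. the Lavrentiev gap occurs at y for the problem with the single end point condition z(0)=0. -/
open MeasureTheory Set Filter ENNReal NNReal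

noncomputable section

/-! Near `0` a Lipschitz `z` with `z 0 = 0` lies below `s^{1/3}/4`, while `z 1 ≥ 1/2`; so on some
`[a, b] ⊆ (0, 1]` it rises from below `a^{1/3}/4` to `b^{1/3}/2` while staying under `s^{1/3}/2`.
There `(z³ - s)² ≥ (7s/8)²`, and Hölder's inequality with the weights `s^{±1/3}` turns the rise
`∫ₐᵇ |z'| ≥ b^{1/3}/4` into `∫ₐᵇ s² z'⁶ ≥ (3/5)⁵/4⁶`. The bound passes to approximating sequences
because convergence of the derivatives in `L¹` forces `y_h(1) → y(1) = 1`. -/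

lemma rpow_one_third_pow_three {s : ℝ} (hs : 0 ≤ s) : (s ^ ((1:ℝ) / 3)) ^ 3 = s := by
  simpa using Real.rpow_inv_natCast_pow hs three_ne_zero

lemma LipschitzOnWith.exists_lt_mul_rpow_one_third {z : ℝ → ℝ} {C : ℝ≥0}
    (hz : LipschitzOnWith C z (Icc 0 1)) (h0 : z 0 = 0) {c : ℝ} (hc : 0 < c) :
    ∃ s ∈ Ioc (0:ℝ) 1, z s < c * s ^ ((1:ℝ) / 3) := by
  set t := min 1 (c / (C + 1))
  have hC : (0:ℝ) ≤ C := C.coe_nonneg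
  have ht0 : 0 < t := lt_min one_pos (by positivity)
  have ht1 : t ≤ 1 := min_le_left _ _
  have htc : t * (C + 1) ≤ c := (le_div_iff₀ (by positivity)).1 (min_le_right _ _)
  have ht3 : t ^ 3 ∈ Icc (0:ℝ) 1 := ⟨by positivity, pow_le_one₀ ht0.le ht1⟩
  refine ⟨t ^ 3, ⟨by positivity, ht3.2⟩, ?_⟩
  have hLip : z (t ^ 3) ≤ C * t ^ 3 := by
    simpa [h0, abs_of_nonneg ht0.le] using
      (le_abs_self _).trans (hz.dist_le_mul _ ht3 0 ⟨le_rfl, zero_le_one⟩)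
  have hroot : (t ^ 3) ^ ((1:ℝ) / 3) = t := by
    simpa using Real.pow_rpow_inv_natCast ht0.le three_ne_zero
  rw [hroot]
  have : t ^ 3 ≤ t ^ 2 := pow_le_pow_of_le_one ht0.le ht1 (by norm_num)
  nlinarith [mul_le_mul_of_nonneg_left this hC]

lemma ContinuousOn.exists_first_le {f g : ℝ → ℝ} {p q : ℝ} (hpq : p ≤ q)
    (hf : ContinuousOn f (Icc p q)) (hg : ContinuousOn g (Icc p q)) (hq : g q ≤ f q) :
    ∃ b ∈ Icc p q, g b ≤ f b ∧ ∀ s ∈ Ico p b, f s < g s := by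
  set S := {s ∈ Icc p q | g s ≤ f s}
  have hS : IsClosed S := isClosed_Icc.isClosed_le hg hf
  have hbdd : BddBelow S := bddBelow_Icc.mono inter_subset_left
  obtain ⟨hbIcc, hb⟩ : sInf S ∈ S := hS.csInf_mem ⟨q, right_mem_Icc.2 hpq, hq⟩ hbdd
  refine ⟨sInf S, hbIcc, hb, fun s hs => not_le.1 fun hgf => ?_⟩
  exact (csInf_le hbdd ⟨⟨hs.1, hs.2.le.trans hbIcc.2⟩, hgf⟩).not_gt hs.2

lemma MemW11.sub_eq_intervalIntegral {z z' : ℝ → ℝ} (hz : MemW11 z z') {a b : ℝ}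
    (ha : 0 ≤ a) (hab : a ≤ b) (hb : b ≤ 1) : z b - z a = ∫ s in a..b, z' s := by
  have hint : ∀ {c d}, c ∈ Icc (0:ℝ) 1 → d ∈ Icc (0:ℝ) 1 → IntervalIntegrable z' volume c d :=
    fun hc hd => hz.1.mono_set (uIcc_subset_uIcc (by simpa [uIcc_of_le] using hc)
      (by simpa [uIcc_of_le] using hd))
  have h0 : (0:ℝ) ∈ Icc (0:ℝ) 1 := ⟨le_rfl, zero_le_one⟩
  have haI : a ∈ Icc (0:ℝ) 1 := ⟨ha, hab.trans hb⟩
  have hbI : b ∈ Icc (0:ℝ) 1 := ⟨ha.trans hab, hb⟩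
  rw [hz.2 a haI, hz.2 b hbI,
    ← intervalIntegral.integral_add_adjacent_intervals (hint h0 haI) (hint haI hbI)]
  ring

lemma lintegral_Ioo_rpow_neg_two_fifths_le {a b : ℝ} (ha : 0 ≤ a) (hb : 0 ≤ b) :
    ∫⁻ s in Ioo a b, ENNReal.ofReal (s ^ (-(2:ℝ) / 5)) ≤
      ENNReal.ofReal (5 / 3 * b ^ ((3:ℝ) / 5)) := by
  calc ∫⁻ s in Ioo a b, ENNReal.ofReal (s ^ (-(2:ℝ) / 5))
      ≤ ∫⁻ s in Ioc 0 b, ENNReal.ofReal (s ^ (-(2:ℝ) / 5)) :=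
        lintegral_mono_set fun s hs => ⟨ha.trans_lt hs.1, hs.2.le⟩
    _ = ENNReal.ofReal (∫ s in (0:ℝ)..b, s ^ (-(2:ℝ) / 5)) := by
        rw [intervalIntegral.integral_of_le hb, ofReal_integral_eq_lintegral_ofReal
          (intervalIntegral.intervalIntegrable_rpow' (by norm_num)).1
          (ae_restrict_of_forall_mem measurableSet_Ioc fun s hs => Real.rpow_nonneg hs.1.le _)]
    _ = ENNReal.ofReal (5 / 3 * b ^ ((3:ℝ) / 5)) := by
        rw [integral_rpow (Or.inl (by norm_num)), Real.zero_rpow (by norm_num)]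
        congr 1
        norm_num
        ring

lemma lintegral_enorm_pow_six_le {S : Set ℝ} (hS : MeasurableSet S) (hpos : S ⊆ Ioi 0)
    {w : ℝ → ℝ} (hw : AEMeasurable w (volume.restrict S)) :
    (∫⁻ s in S, ‖w s‖ₑ) ^ 6 ≤ (∫⁻ s in S, ENNReal.ofReal (s ^ 2 * w s ^ 6)) *
      (∫⁻ s in S, ENNReal.ofReal (s ^ (-(2:ℝ) / 5))) ^ 5 := by
  set f : ℝ → ℝ≥0∞ := fun s => ENNReal.ofReal (s ^ ((1:ℝ) / 3) * |w s|)
  set g : ℝ → ℝ≥0∞ := fun s => ENNReal.ofReal (s ^ (-(1:ℝ) / 3))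
  have hf : AEMeasurable f (volume.restrict S) := by fun_prop
  have hg : AEMeasurable g (volume.restrict S) := by fun_prop
  have hfg : ∫⁻ s in S, ‖w s‖ₑ = ∫⁻ s in S, (f * g) s := by
    refine setLIntegral_congr_fun hS fun s hs => ?_
    have hs : 0 < s := hpos hs
    rw [Pi.mul_apply, ← ENNReal.ofReal_mul (by positivity), Real.enorm_eq_ofReal_abs,
      mul_right_comm, ← Real.rpow_add hs]
    norm_num
  have hf6 : ∫⁻ s in S, f s ^ (6:ℝ) = ∫⁻ s in S, ENNReal.ofReal (s ^ 2 * w s ^ 6) := by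
    refine setLIntegral_congr_fun hS fun s hs => ?_
    have hs : 0 < s := hpos hs
    rw [ENNReal.ofReal_rpow_of_nonneg (by positivity) (by norm_num),
      Real.mul_rpow (by positivity) (abs_nonneg _), ← Real.rpow_mul hs.le]
    norm_num [Real.rpow_natCast, pow_abs, abs_of_nonneg (Even.pow_nonneg ⟨3, rfl⟩ (w s))]
  have hg6 : ∫⁻ s in S, g s ^ ((6:ℝ) / 5) = ∫⁻ s in S, ENNReal.ofReal (s ^ (-(2:ℝ) / 5)) := by
    refine setLIntegral_congr_fun hS fun s hs => ?_
    have hs : 0 < s := hpos hs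
    rw [ENNReal.ofReal_rpow_of_nonneg (by positivity) (by norm_num), ← Real.rpow_mul hs.le]
    norm_num
  have holder := ENNReal.lintegral_mul_le_Lp_mul_Lq (volume.restrict S)
    (⟨by norm_num, by norm_num, by norm_num⟩ : Real.HolderConjugate 6 (6 / 5)) hf hg
  rw [hf6, hg6] at holder
  rw [hfg]
  refine (pow_le_pow_left₀ zero_le holder 6).trans_eq ?_
  rw [mul_pow, ← ENNReal.rpow_natCast, ← ENNReal.rpow_natCast, ← ENNReal.rpow_natCast,
    ← ENNReal.rpow_mul, ← ENNReal.rpow_mul]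
  norm_num

lemma lintegral_Ioo_sq_mul_pow_six_ge {z z' : ℝ → ℝ} (hz : MemW11 z z') {a b : ℝ}
    (ha : 0 < a) (hab : a ≤ b) (hb : b ≤ 1)
    (hza : z a ≤ 1 / 4 * a ^ ((1:ℝ) / 3)) (hzb : 1 / 2 * b ^ ((1:ℝ) / 3) ≤ z b) :
    ENNReal.ofReal ((3 / 5) ^ 5 / 4 ^ 6) ≤ ∫⁻ s in Ioo a b, ENNReal.ofReal (s ^ 2 * z' s ^ 6) := by
  have hb0 : 0 < b := ha.trans_le hab
  have hrise : ENNReal.ofReal (1 / 4 * b ^ ((1:ℝ) / 3)) ≤ ∫⁻ s in Ioo a b, ‖z' s‖ₑ :=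
    calc ENNReal.ofReal (1 / 4 * b ^ ((1:ℝ) / 3))
        ≤ ENNReal.ofReal (z b - z a) := by
          gcongr
          linarith [Real.rpow_le_rpow ha.le hab (by norm_num : (0:ℝ) ≤ 1 / 3)]
      _ = ENNReal.ofReal (∫ s in Ioo a b, z' s) := by
          rw [hz.sub_eq_intervalIntegral ha.le hab hb, intervalIntegral.integral_of_le hab,
            integral_Ioc_eq_integral_Ioo]
      _ ≤ ‖∫ s in Ioo a b, z' s‖ₑ := Real.ofReal_le_enorm _
      _ ≤ ∫⁻ s in Ioo a b, ‖z' s‖ₑ := enorm_integral_le_lintegral_enorm _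
  have hz'meas : AEMeasurable z' (volume.restrict (Ioo a b)) :=
    (hz.1.1.mono_set fun s hs => ⟨ha.trans hs.1, hs.2.le.trans hb⟩).aemeasurable
  have hholder := lintegral_enorm_pow_six_le measurableSet_Ioo (fun s hs => ha.trans hs.1) hz'meas
  have hweight := lintegral_Ioo_rpow_neg_two_fifths_le ha.le hb0.le
  have hbound : ENNReal.ofReal (1 / 4 * b ^ ((1:ℝ) / 3)) ^ 6 ≤
      (∫⁻ s in Ioo a b, ENNReal.ofReal (s ^ 2 * z' s ^ 6)) *
        ENNReal.ofReal (5 / 3 * b ^ ((3:ℝ) / 5)) ^ 5 := by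
    grw [hrise, hholder, hweight]
  have hcalc : ENNReal.ofReal ((3 / 5) ^ 5 / 4 ^ 6) * ENNReal.ofReal (5 / 3 * b ^ ((3:ℝ) / 5)) ^ 5
      ≤ ENNReal.ofReal (1 / 4 * b ^ ((1:ℝ) / 3)) ^ 6 := by
    rw [← ENNReal.ofReal_pow (by positivity), ← ENNReal.ofReal_mul (by positivity),
      ← ENNReal.ofReal_pow (by positivity)]
    apply ENNReal.ofReal_le_ofReal
    have h3 : (b ^ ((3:ℝ) / 5)) ^ 5 = b ^ 3 := by
      rw [← Real.rpow_mul_natCast hb0.le]; norm_num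
    have h2 : (b ^ ((1:ℝ) / 3)) ^ 6 = b ^ 2 := by
      rw [← Real.rpow_mul_natCast hb0.le]; norm_num
    rw [mul_pow, mul_pow, h3, h2]
    nlinarith [pow_le_pow_of_le_one hb0.le hb (by norm_num : 2 ≤ 3)]
  have hpos : ENNReal.ofReal (5 / 3 * b ^ ((3:ℝ) / 5)) ^ 5 ≠ 0 :=
    pow_ne_zero _ (ENNReal.ofReal_pos.2 (by positivity)).ne'
  exact (ENNReal.mul_le_mul_iff_left hpos (by simp)).1 (hcalc.trans hbound)

lemma ManiaF_ge_of_crossing {z z' : ℝ → ℝ} (hz : MemW11 z z') {a b : ℝ}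
    (ha : 0 < a) (hab : a ≤ b) (hb : b ≤ 1)
    (hza : z a ≤ 1 / 4 * a ^ ((1:ℝ) / 3)) (hzb : 1 / 2 * b ^ ((1:ℝ) / 3) ≤ z b)
    (hbelow : ∀ s ∈ Ioo a b, z s ≤ 1 / 2 * s ^ ((1:ℝ) / 3)) :
    ENNReal.ofReal (49 / 64 * ((3 / 5) ^ 5 / 4 ^ 6)) ≤ ManiaF z z' := by
  have hpoint : ∀ s ∈ Ioo a b, ENNReal.ofReal (49 / 64) * ENNReal.ofReal (s ^ 2 * z' s ^ 6) ≤
      ENNReal.ofReal ((z s ^ 3 - s) ^ 2 * z' s ^ 6) := by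
    intro s hs
    have hs0 : 0 < s := ha.trans hs.1
    have hcube : z s ^ 3 ≤ s / 8 :=
      calc z s ^ 3 ≤ (1 / 2 * s ^ ((1:ℝ) / 3)) ^ 3 := (Odd.pow_le_pow (by decide)).2 (hbelow s hs)
        _ = s / 8 := by rw [mul_pow, rpow_one_third_pow_three hs0.le]; ring
    rw [← ENNReal.ofReal_mul (by norm_num), ← mul_assoc]
    gcongr
    nlinarith
  calc ENNReal.ofReal (49 / 64 * ((3 / 5) ^ 5 / 4 ^ 6))
      = ENNReal.ofReal (49 / 64) * ENNReal.ofReal ((3 / 5) ^ 5 / 4 ^ 6) :=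
        ENNReal.ofReal_mul (by norm_num)
    _ ≤ ENNReal.ofReal (49 / 64) * ∫⁻ s in Ioo a b, ENNReal.ofReal (s ^ 2 * z' s ^ 6) := by
        gcongr
        exact lintegral_Ioo_sq_mul_pow_six_ge hz ha hab hb hza hzb
    _ = ∫⁻ s in Ioo a b, ENNReal.ofReal (49 / 64) * ENNReal.ofReal (s ^ 2 * z' s ^ 6) :=
        (lintegral_const_mul' _ _ ENNReal.ofReal_ne_top).symm
    _ ≤ ∫⁻ s in Ioo a b, ENNReal.ofReal ((z s ^ 3 - s) ^ 2 * z' s ^ 6) :=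
        setLIntegral_mono' measurableSet_Ioo hpoint
    _ ≤ ManiaF z z' := lintegral_mono_set fun s hs => ⟨(ha.trans hs.1).le, hs.2.le.trans hb⟩

theorem ManiaF_ge_of_lipschitzOnWith {z z' : ℝ → ℝ} (hz : MemW11 z z') {C : ℝ≥0}
    (hL : LipschitzOnWith C z (Icc 0 1)) (h0 : z 0 = 0) (h1 : 1 / 2 ≤ z 1) :
    ENNReal.ofReal (49 / 64 * ((3 / 5) ^ 5 / 4 ^ 6)) ≤ ManiaF z z' := by
  obtain ⟨a, ⟨ha0, ha1⟩, hza⟩ := hL.exists_lt_mul_rpow_one_third h0 (by norm_num : (0:ℝ) < 1 / 4)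
  have hcont : ContinuousOn (fun s : ℝ => 1 / 2 * s ^ ((1:ℝ) / 3)) (Icc a 1) :=
    (Real.continuous_rpow_const (by norm_num)).continuousOn.const_smul (1 / 2 : ℝ)
  obtain ⟨b, ⟨hab, hb1⟩, hzb, hbelow⟩ := ContinuousOn.exists_first_le ha1
    (hL.continuousOn.mono (Icc_subset_Icc ha0.le le_rfl)) hcont (by simpa using h1)
  exact ManiaF_ge_of_crossing hz ha0 hab hb1 hza.le hzb fun s hs => (hbelow s ⟨hs.1.le, hs.2⟩).le

lemma integral_one_third_mul_rpow_neg_two_thirds :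
    ∫ s in (0:ℝ)..1, 1 / 3 * s ^ (-(2:ℝ) / 3) = 1 := by
  rw [intervalIntegral.integral_const_mul, integral_rpow (Or.inl (by norm_num)), Real.one_rpow,
    Real.zero_rpow (by norm_num)]
  norm_num

lemma MemW11.abs_sub_sub_integral_le {z z' g : ℝ → ℝ} (hz : MemW11 z z')
    (hg : IntervalIntegrable g volume 0 1) :
    |z 1 - z 0 - ∫ s in (0:ℝ)..1, g s| ≤ ∫ s in Icc (0:ℝ) 1, |z' s - g s| := by
  rw [hz.sub_eq_intervalIntegral le_rfl zero_le_one le_rfl,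
    ← intervalIntegral.integral_sub hz.1 hg, integral_Icc_eq_integral_Ioc,
    ← intervalIntegral.integral_of_le zero_le_one]
  exact intervalIntegral.abs_integral_le_integral_abs zero_le_one

lemma tendsto_apply_one_of_tendsto_integral_abs_sub {ι : Type*} {l : Filter ι}
    {yh yh' : ι → ℝ → ℝ} (hW : ∀ h, MemW11 (yh h) (yh' h)) (h0 : ∀ h, yh h 0 = 0)
    (hd : Tendsto (fun h => ∫ s in Icc (0:ℝ) 1, |yh' h s - 1 / 3 * s ^ (-(2:ℝ) / 3)|) l
      (nhds 0)) :
    Tendsto (fun h => yh h 1) l (nhds 1) := by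
  have hg : IntervalIntegrable (fun s : ℝ => 1 / 3 * s ^ (-(2:ℝ) / 3)) volume 0 1 :=
    (intervalIntegral.intervalIntegrable_rpow' (by norm_num)).const_mul _
  refine tendsto_iff_dist_tendsto_zero.2 (squeeze_zero (fun _ => dist_nonneg) (fun h => ?_) hd)
  have := (hW h).abs_sub_sub_integral_le hg
  rwa [h0 h, sub_zero, integral_one_third_mul_rpow_neg_two_thirds, ← Real.dist_eq] at this

lemma ManiaF_rpow_one_third :
    ManiaF (fun s : ℝ => s ^ ((1:ℝ) / 3)) (fun s : ℝ => 1 / 3 * s ^ (-(2:ℝ) / 3)) = 0 := by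
  rw [ManiaF, setLIntegral_congr_fun measurableSet_Icc (g := fun _ => 0)
    fun s hs => by rw [rpow_one_third_pow_three hs.1, sub_self]; simp, lintegral_zero]

/-- **Manià's example: occurrence of the Lavrentiev gap at `y(s)=s^{1/3}` for the
problem with the single initial condition `z(0)=0`.** -/
theorem mania_gap_initial_condition :
    ∃ η : ℝ, 0 < η ∧
      -- `F(z) ≥ η` for every Lipschitz `z` with `z(0)=0` and `z(1) ∈ [3/4, 3/2]`
      (∀ z z' : ℝ → ℝ, MemW11 z z' →
        (∃ C : ℝ≥0, LipschitzOnWith C z (Set.Icc 0 1)) → z 0 = 0 →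
        z 1 ∈ Set.Icc (3/4 : ℝ) (3/2) → ENNReal.ofReal η ≤ ManiaF z z') ∧
      -- consequently the Lavrentiev gap occurs at `y`
      (∀ yh yh' : ℕ → ℝ → ℝ,
        (∀ h, MemW11 (yh h) (yh' h)) →
        (∀ h, ∃ C : ℝ≥0, LipschitzOnWith C (yh h) (Set.Icc 0 1)) →
        (∀ h, yh h 0 = 0) →
        -- `y_h → y` in `W^{1,1}([0,1])`
        Tendsto (fun h => ∫ s in Set.Icc (0:ℝ) 1, |yh h s - s ^ ((1:ℝ)/3)|)
          atTop (nhds 0) →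
        Tendsto (fun h => ∫ s in Set.Icc (0:ℝ) 1,
          |yh' h s - (1/3) * s ^ (-(2:ℝ)/3)|) atTop (nhds 0) →
        ENNReal.ofReal η ≤ Filter.liminf (fun h => ManiaF (yh h) (yh' h)) atTop) ∧
      -- while `F(y) = 0`
      ManiaF (fun s : ℝ => s ^ ((1:ℝ)/3)) (fun s : ℝ => (1/3) * s ^ (-(2:ℝ)/3)) = 0 := by
  refine ⟨49 / 64 * ((3 / 5) ^ 5 / 4 ^ 6), by norm_num,
    fun z z' hz ⟨C, hL⟩ h0 h1 => ManiaF_ge_of_lipschitzOnWith hz hL h0 (by linarith [h1.1]),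
    ?_, ManiaF_rpow_one_third⟩
  intro yh yh' hW hL h0 _ hd
  have hend : ∀ᶠ h in atTop, 1 / 2 ≤ yh h 1 :=
    (tendsto_apply_one_of_tendsto_integral_abs_sub hW h0 hd).eventually
      (eventually_ge_nhds (by norm_num))
  refine le_liminf_of_le (by isBoundedDefault) (hend.mono fun h hh => ?_)
  obtain ⟨C, hC⟩ := hL h
  exact ManiaF_ge_of_lipschitzOnWith (hW h) hC (h0 h) hh
end
end

section
/- (Example 3.4, Alberti: occurrence of the Lavrentiev phenomenon for an autonomous, convex, lower semicontinuous extended-valued problem with both end point conditions.) Let y ∈ W^{1,1}([0,1];ℝ) be of class C¹ on [0,1), with y(0)=0, y(1)=1, y'(s) > 0 for all s ∈ [0,1), and lim_{s→1⁻} y'(s) = +∞ (for instance y(s) = 1 − √(1−s)). For ζ ∈ [0,1) set q(ζ) := y'(y^{−1}(ζ)). Then for every Lipschitz function z : [0,1] → ℝ with z(0)=0 and z(1)=1, the set { s ∈ [0,1] : z(s) ∈ [0,1) and z'(s) > q(z(s)) } has positive Lebesgue measure. Equivalently, setting Λ(z,v) = 0 if (z ∈ [0,1) and v ≤ q(z))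 or z ∉ [0,1), and Λ(z,v) = +∞ otherwise, one has ∫_0^1 Λ(z(s),z'(s)) ds = +∞ for every Lipschitz z with z(0)=0, z(1)=1, while the functional vanishes at y. -/
/-!
The inverse `G` of `y` on `[0,1)` has `G' = 1 / q`. So if `z' ≤ q(z)` almost everywhere where
`z ∈ [0,1)`, the Lipschitz function `G ∘ z` has slope at most `1` while `z` rises from `0` to a
level `β < 1`; hence `G β ≤ t` when `z` first reaches `β` at time `t`, that is `z ≤ y` there.
But `y' → ∞` at `1` and `z 1 = y 1`, so the Lipschitz bound on `z` forces `z > y` shortly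
before `1`, and a level `β` between them gives the contradiction.
-/

open MeasureTheory Set Filter ENNReal NNReal

noncomputable section

open Classical in
/-- The extended-valued autonomous Lagrangian of Example 3.4:
`Λ(z,v) = 0` if (`z ∈ [0,1)` and `v ≤ q(z)`) or `z ∉ [0,1)`, and `+∞` otherwise. -/
def albertiLag (q : ℝ → ℝ) (z v : ℝ) : ℝ≥0∞ :=
  if (z ∈ Set.Ico (0:ℝ) 1 ∧ v ≤ q z) ∨ z ∉ Set.Ico (0:ℝ) 1 then 0 else ⊤

open Topology Function

theorem AbsolutelyContinuousOnInterval.sub_le_mul_of_ae_deriv_le {f : ℝ → ℝ} {a b c : ℝ}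
    (hab : a ≤ b) (hf : AbsolutelyContinuousOnInterval f a b)
    (hf' : ∀ᵐ t, t ∈ Ioo a b → deriv f t ≤ c) : f b - f a ≤ c * (b - a) := by
  have hle : deriv f ≤ᵐ[volume.restrict (Icc a b)] fun _ => c := by
    rw [← Measure.restrict_congr_set Ioo_ae_eq_Icc]
    exact (ae_restrict_iff' measurableSet_Ioo).2 hf'
  calc f b - f a = ∫ t in a..b, deriv f t := hf.integral_deriv_eq_sub.symm
    _ ≤ ∫ _ in a..b, c :=
      intervalIntegral.integral_mono_ae_restrict hab hf.intervalIntegrable_deriv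
        intervalIntegrable_const hle
    _ = c * (b - a) := by simp [mul_comm]

theorem ContinuousOn.exists_first_eq {f : ℝ → ℝ} {a b β : ℝ} (hab : a ≤ b)
    (hf : ContinuousOn f (Icc a b)) (ha : f a ≤ β) (hb : β ≤ f b) :
    ∃ t ∈ Icc a b, f t = β ∧ ∀ s ∈ Ico a t, f s < β := by
  set A := {t ∈ Icc a b | β ≤ f t}
  have hAbdd : BddBelow A := ⟨a, fun t ht => ht.1.1⟩
  have ht : sInf A ∈ A := (hf.preimage_isClosed_of_isClosed isClosed_Icc isClosed_Ici).csInf_mem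
    ⟨b, ⟨hab, le_rfl⟩, hb⟩ hAbdd
  have hlt : ∀ s ∈ Ico a (sInf A), f s < β := fun s hs =>
    not_le.1 fun h => (csInf_le hAbdd ⟨⟨hs.1, hs.2.le.trans ht.1.2⟩, h⟩).not_gt hs.2
  obtain ⟨s, hs, hfs⟩ := intermediate_value_Icc ht.1.1 (hf.mono (Icc_subset_Icc_right ht.1.2))
    ⟨ha, ht.2⟩
  obtain rfl : s = sInf A := hs.2.eq_of_not_lt fun h => (hlt s ⟨hs.1, h⟩).ne hfs
  exact ⟨_, ht.1, hfs, hlt⟩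

theorem ContinuousOn.exists_last_eq {f : ℝ → ℝ} {a b α : ℝ} (hab : a ≤ b)
    (hf : ContinuousOn f (Icc a b)) (ha : f a ≤ α) (hb : α ≤ f b) :
    ∃ t ∈ Icc a b, f t = α ∧ ∀ s ∈ Ioc t b, α < f s := by
  set B := {t ∈ Icc a b | f t ≤ α}
  have hBbdd : BddAbove B := ⟨b, fun t ht => ht.1.2⟩
  have ht : sSup B ∈ B := (hf.preimage_isClosed_of_isClosed isClosed_Icc isClosed_Iic).csSup_mem
    ⟨a, ⟨le_rfl, hab⟩, ha⟩ hBbdd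
  have hlt : ∀ s ∈ Ioc (sSup B) b, α < f s := fun s hs =>
    not_le.1 fun h => (le_csSup hBbdd ⟨⟨ht.1.1.trans hs.1.le, hs.2⟩, h⟩).not_gt hs.1
  obtain ⟨s, hs, hfs⟩ := intermediate_value_Icc ht.1.2 (hf.mono (Icc_subset_Icc_left ht.1.1))
    ⟨ht.2, hb⟩
  obtain rfl : s = sSup B := (hs.1.eq_of_not_lt fun h => (hlt s ⟨h, hs.2⟩).ne' hfs).symm
  exact ⟨_, ht.1, hfs, hlt⟩

theorem ContinuousOn.exists_crossing {f : ℝ → ℝ} {a b α β : ℝ} (hab : a ≤ b)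
    (hf : ContinuousOn f (Icc a b)) (ha : f a ≤ α) (hαβ : α < β) (hb : β ≤ f b) :
    ∃ t₀ t₁, a ≤ t₀ ∧ t₀ ≤ t₁ ∧ t₁ ≤ b ∧ f t₀ = α ∧ f t₁ = β ∧
      MapsTo f (Icc t₀ t₁) (Icc α β) ∧ MapsTo f (Ioo t₀ t₁) (Ioo α β) := by
  obtain ⟨t₁, ht₁, hft₁, hlt⟩ := hf.exists_first_eq hab (ha.trans hαβ.le) hb
  obtain ⟨t₀, ht₀, hft₀, hgt⟩ :=
    (hf.mono (Icc_subset_Icc_right ht₁.2)).exists_last_eq ht₁.1 ha (hft₁ ▸ hαβ.le)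
  refine ⟨t₀, t₁, ht₀.1, ht₀.2, ht₁.2, hft₀, hft₁, fun t ht => ⟨?_, ?_⟩,
    fun t ht => ⟨hgt t ⟨ht.1, ht.2.le⟩, hlt t ⟨ht₀.1.trans ht.1.le, ht.2⟩⟩⟩
  · rcases ht.1.eq_or_lt with rfl | h
    exacts [hft₀.ge, (hgt t ⟨h, ht.2⟩).le]
  · rcases ht.2.eq_or_lt with rfl | h
    exacts [hft₁.le, (hlt t ⟨ht₀.1.trans ht.1, h⟩).le]

theorem MemW11.continuousOn {z z' : ℝ → ℝ} (hz : MemW11 z z') : ContinuousOn z (Icc 0 1) := by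
  have hprim := intervalIntegral.continuousOn_primitive_interval' hz.1 left_mem_uIcc
  rw [uIcc_of_le zero_le_one] at hprim
  exact (continuousOn_const.add hprim).congr hz.2

theorem MemW11.ae_hasDerivAt {z z' : ℝ → ℝ} (hz : MemW11 z z') :
    ∀ᵐ t, t ∈ Ioo 0 1 → HasDerivAt z (z' t) t := by
  filter_upwards [hz.1.ae_hasDerivAt_integral] with t ht ht01
  have hI : Icc (0:ℝ) 1 = uIcc 0 1 := (uIcc_of_le zero_le_one).symm
  refine ((ht (hI ▸ Ioo_subset_Icc_self ht01) 0 left_mem_uIcc).const_add (z 0))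
    |>.congr_of_eventuallyEq ?_
  filter_upwards [Icc_mem_nhds ht01.1 ht01.2] with u hu using hz.2 u hu

structure IncreasingProfile (y y' : ℝ → ℝ) : Prop where
  continuousOn : ContinuousOn y (Icc 0 1)
  hasDerivAt : ∀ s ∈ Ico (0:ℝ) 1, HasDerivAt y (y' s) s
  continuousOn_deriv : ContinuousOn y' (Ico 0 1)
  map_zero : y 0 = 0
  map_one : y 1 = 1
  deriv_pos : ∀ s ∈ Ico (0:ℝ) 1, 0 < y' s

namespace IncreasingProfile

variable {y y' : ℝ → ℝ}

theorem mul_sub_le_sub (hy : IncreasingProfile y y') {m s₁ s₂ : ℝ} (h₁ : 0 ≤ s₁) (h₁₂ : s₁ ≤ s₂)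
    (h₂ : s₂ ≤ 1) (hm : ∀ s ∈ Ioo s₁ s₂, m ≤ y' s) : m * (s₂ - s₁) ≤ y s₂ - y s₁ := by
  have hIoo : ∀ s ∈ Ioo s₁ s₂, s ∈ Ico (0:ℝ) 1 := fun s hs =>
    ⟨h₁.trans hs.1.le, hs.2.trans_le h₂⟩
  refine (convex_Icc s₁ s₂).mul_sub_le_image_sub_of_le_deriv
    (hy.continuousOn.mono (Icc_subset_Icc h₁ h₂)) ?_ ?_ s₁ (left_mem_Icc.2 h₁₂) s₂
    (right_mem_Icc.2 h₁₂) h₁₂ <;> rw [interior_Icc]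
  · exact fun s hs => (hy.hasDerivAt s (hIoo s hs)).differentiableAt.differentiableWithinAt
  · exact fun s hs => (hy.hasDerivAt s (hIoo s hs)).deriv ▸ hm s hs

theorem strictMonoOn (hy : IncreasingProfile y y') : StrictMonoOn y (Icc 0 1) := by
  refine strictMonoOn_of_deriv_pos (convex_Icc 0 1) hy.continuousOn fun s hs => ?_
  rw [interior_Icc] at hs
  rw [(hy.hasDerivAt s (Ioo_subset_Ico_self hs)).deriv]
  exact hy.deriv_pos s (Ioo_subset_Ico_self hs)

theorem mapsTo (hy : IncreasingProfile y y') : MapsTo y (Ico 0 1) (Ico 0 1) := fun _ hs =>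
  have hs' := Ico_subset_Icc_self hs
  ⟨hy.map_zero ▸ hy.strictMonoOn.monotoneOn (left_mem_Icc.2 zero_le_one) hs' hs.1,
    hy.map_one ▸ hy.strictMonoOn hs' (right_mem_Icc.2 zero_le_one) hs.2⟩

theorem bijOn (hy : IncreasingProfile y y') : BijOn y (Ico 0 1) (Ico 0 1) := by
  refine ⟨hy.mapsTo, hy.strictMonoOn.injOn.mono Ico_subset_Icc_self, fun ζ hζ => ?_⟩
  obtain ⟨s, hs, hys⟩ := intermediate_value_Icc zero_le_one hy.continuousOn
    (show ζ ∈ Icc (y 0) (y 1) by rw [hy.map_zero, hy.map_one]; exact Ico_subset_Icc_self hζ)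
  refine ⟨s, ⟨hs.1, hs.2.lt_of_ne ?_⟩, hys⟩
  rintro rfl
  exact hζ.2.ne (hys ▸ hy.map_one)

theorem invOn (hy : IncreasingProfile y y') :
    InvOn (invFunOn y (Ico 0 1)) y (Ico 0 1) (Ico 0 1) :=
  hy.bijOn.invOn_invFunOn

theorem mapsTo_invFunOn (hy : IncreasingProfile y y') :
    MapsTo (invFunOn y (Ico 0 1)) (Ico 0 1) (Ico 0 1) :=
  hy.bijOn.surjOn.mapsTo_invFunOn

theorem eq_deriv_invFunOn (hy : IncreasingProfile y y') {q : ℝ → ℝ}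
    (hq : ∀ s ∈ Ico (0:ℝ) 1, q (y s) = y' s) {ζ : ℝ} (hζ : ζ ∈ Ico (0:ℝ) 1) :
    q ζ = y' (invFunOn y (Ico 0 1) ζ) := by
  rw [← hq _ (hy.mapsTo_invFunOn hζ), hy.invOn.2 hζ]

theorem monotoneOn_invFunOn (hy : IncreasingProfile y y') :
    MonotoneOn (invFunOn y (Ico 0 1)) (Ico 0 1) := fun ζ₁ hζ₁ ζ₂ hζ₂ h => by
  rwa [← hy.strictMonoOn.le_iff_le (Ico_subset_Icc_self (hy.mapsTo_invFunOn hζ₁))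
    (Ico_subset_Icc_self (hy.mapsTo_invFunOn hζ₂)), hy.invOn.2 hζ₁, hy.invOn.2 hζ₂]

theorem lipschitzOnWith_invFunOn (hy : IncreasingProfile y y') {β : ℝ}
    (hβ : β ∈ Ico (0:ℝ) 1) : ∃ K, LipschitzOnWith K (invFunOn y (Ico 0 1)) (Icc 0 β) := by
  have hIcc : Icc 0 β ⊆ Ico 0 1 := Icc_subset_Ico_right hβ.2
  have hGβ := hy.mapsTo_invFunOn hβ
  obtain ⟨s₀, hs₀, hmin⟩ := isCompact_Icc.exists_isMinOn (nonempty_Icc.2 hGβ.1)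
    (hy.continuousOn_deriv.mono (Icc_subset_Ico_right hGβ.2))
  have hm := hy.deriv_pos s₀ (Icc_subset_Ico_right hGβ.2 hs₀)
  refine ⟨_, LipschitzOnWith.of_le_add_mul' (y' s₀)⁻¹ fun ζ₁ hζ₁ ζ₂ hζ₂ => ?_⟩
  rcases le_total ζ₁ ζ₂ with h | h
  · have : 0 ≤ (y' s₀)⁻¹ * dist ζ₁ ζ₂ := by positivity
    linarith [hy.monotoneOn_invFunOn (hIcc hζ₁) (hIcc hζ₂) h]
  · have hG₁ := hy.mapsTo_invFunOn (hIcc hζ₁)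
    have hG₂ := hy.mapsTo_invFunOn (hIcc hζ₂)
    have hslope := hy.mul_sub_le_sub hG₂.1 (hy.monotoneOn_invFunOn (hIcc hζ₂) (hIcc hζ₁) h)
      hG₁.2.le fun s hs => hmin ⟨hG₂.1.trans hs.1.le,
        hs.2.le.trans (hy.monotoneOn_invFunOn (hIcc hζ₁) hβ hζ₁.2)⟩
    rw [hy.invOn.2 (hIcc hζ₁), hy.invOn.2 (hIcc hζ₂)] at hslope
    rw [Real.dist_eq, abs_of_nonneg (sub_nonneg.2 h), ← sub_le_iff_le_add', le_inv_mul_iff₀ hm]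
    exact hslope

theorem continuousOn_invFunOn (hy : IncreasingProfile y y') :
    ContinuousOn (invFunOn y (Ico 0 1)) (Ico 0 1) := fun ζ hζ => by
  have hβ : (ζ + 1) / 2 ∈ Ico (0:ℝ) 1 := ⟨by linarith [hζ.1], by linarith [hζ.2]⟩
  obtain ⟨K, hK⟩ := hy.lipschitzOnWith_invFunOn hβ
  refine (hK.continuousOn ζ ⟨hζ.1, by linarith [hζ.2]⟩).mono_of_mem_nhdsWithin ?_
  exact mem_nhdsWithin.2 ⟨Iio ((ζ + 1) / 2), isOpen_Iio, mem_Iio.2 (by linarith [hζ.2]),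
    fun x hx => ⟨hx.2.1, hx.1.le⟩⟩

theorem hasDerivAt_invFunOn (hy : IncreasingProfile y y') {ζ : ℝ} (hζ : ζ ∈ Ioo (0:ℝ) 1) :
    HasDerivAt (invFunOn y (Ico 0 1)) (y' (invFunOn y (Ico 0 1) ζ))⁻¹ ζ := by
  have hG := hy.mapsTo_invFunOn (Ioo_subset_Ico_self hζ)
  refine HasDerivAt.of_local_left_inverse
    (hy.continuousOn_invFunOn.continuousAt (Ico_mem_nhds hζ.1 hζ.2)) (hy.hasDerivAt _ hG)
    (hy.deriv_pos _ hG).ne' ?_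
  filter_upwards [Ioo_mem_nhds hζ.1 hζ.2] with w hw using hy.invOn.2 (Ioo_subset_Ico_self hw)

theorem invFunOn_comp_sub_le (hy : IncreasingProfile y y') {q z z' : ℝ → ℝ} {C : ℝ≥0}
    {t₀ t₁ β : ℝ} (hq : ∀ s ∈ Ico (0:ℝ) 1, q (y s) = y' s) (ht : t₀ ≤ t₁)
    (hβ : β ∈ Ico (0:ℝ) 1) (hz : LipschitzOnWith C z (Icc t₀ t₁))
    (hmaps : MapsTo z (Icc t₀ t₁) (Icc 0 β)) (hpos : ∀ t ∈ Ioo t₀ t₁, 0 < z t)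
    (hz' : ∀ᵐ t, t ∈ Ioo t₀ t₁ → HasDerivAt z (z' t) t ∧ z' t ≤ q (z t)) :
    invFunOn y (Ico 0 1) (z t₁) - invFunOn y (Ico 0 1) (z t₀) ≤ t₁ - t₀ := by
  obtain ⟨K, hK⟩ := hy.lipschitzOnWith_invFunOn hβ
  have hac : AbsolutelyContinuousOnInterval (invFunOn y (Ico 0 1) ∘ z) t₀ t₁ := by
    refine LipschitzOnWith.absolutelyContinuousOnInterval (K := K * C) ?_
    rw [uIcc_of_le ht]
    exact hK.comp hz hmaps
  refine (hac.sub_le_mul_of_ae_deriv_le ht ?_).trans_eq (one_mul _)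
  filter_upwards [hz'] with t hzt ht
  obtain ⟨hderiv, hle⟩ := hzt ht
  have hzt : z t ∈ Ioo 0 1 := ⟨hpos t ht, (hmaps (Ioo_subset_Icc_self ht)).2.trans_lt hβ.2⟩
  have hG := hy.mapsTo_invFunOn (Ioo_subset_Ico_self hzt)
  rw [((hy.hasDerivAt_invFunOn hzt).comp t hderiv).deriv, inv_mul_le_iff₀ (hy.deriv_pos _ hG),
    mul_one, ← hy.eq_deriv_invFunOn hq (Ioo_subset_Ico_self hzt)]
  exact hle

theorem exists_lt_of_lipschitzOnWith (hy : IncreasingProfile y y')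
    (hy'top : Tendsto y' (𝓝[<] 1) atTop) {z : ℝ → ℝ} {C : ℝ≥0}
    (hz : LipschitzOnWith C z (Icc 0 1)) (hz1 : z 1 = 1) : ∃ T ∈ Ico (0:ℝ) 1, y T < z T := by
  obtain ⟨a, ha, hsub⟩ :=
    mem_nhdsLT_iff_exists_Ioo_subset.1 (hy'top.eventually_ge_atTop (C + 1))
  obtain ⟨T, haT, hT1⟩ := exists_between (max_lt (mem_Iio.1 ha) one_pos)
  have hT0 : 0 ≤ T := (le_max_right a 0).trans haT.le
  refine ⟨T, ⟨hT0, hT1⟩, ?_⟩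
  have hyT := hy.mul_sub_le_sub hT0 hT1.le le_rfl fun s hs =>
    hsub ⟨(le_max_left a 0).trans_lt (haT.trans hs.1), hs.2⟩
  have hzT := hz.dist_le_mul 1 (right_mem_Icc.2 zero_le_one) T ⟨hT0, hT1.le⟩
  rw [Real.dist_eq, Real.dist_eq, hz1, abs_of_pos (sub_pos.2 hT1)] at hzT
  rw [hy.map_one] at hyT
  linarith [le_abs_self (1 - z T)]

theorem volume_pos_of_lipschitzOnWith (hy : IncreasingProfile y y')
    (hy'top : Tendsto y' (𝓝[<] 1) atTop) {q z z' : ℝ → ℝ} {C : ℝ≥0}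
    (hq : ∀ s ∈ Ico (0:ℝ) 1, q (y s) = y' s) (hz : MemW11 z z')
    (hlip : LipschitzOnWith C z (Icc 0 1)) (hz0 : z 0 = 0) (hz1 : z 1 = 1) :
    0 < volume {s ∈ Icc (0:ℝ) 1 | z s ∈ Ico (0:ℝ) 1 ∧ q (z s) < z' s} := by
  refine pos_iff_ne_zero.2 fun hnull => ?_
  obtain ⟨T, hT, hyz⟩ := hy.exists_lt_of_lipschitzOnWith hy'top hlip hz1
  have hyT := hy.mapsTo hT
  set β := min (z T) ((y T + 1) / 2)
  have hyβ : y T < β := lt_min hyz (by linarith [hyT.2])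
  have hβ : β ∈ Ico (0:ℝ) 1 :=
    ⟨hyT.1.trans hyβ.le, min_lt_of_right_lt (by linarith [hyT.2])⟩
  obtain ⟨t₀, t₁, h0, h01, h1, hzt₀, hzt₁, hIcc, hIoo⟩ :=
    (hlip.continuousOn.mono (Icc_subset_Icc_right hT.2.le)).exists_crossing hT.1 hz0.le
      (hyT.1.trans_lt hyβ) (min_le_left _ _)
  have hsub : Icc t₀ t₁ ⊆ Icc 0 1 := Icc_subset_Icc h0 (h1.trans hT.2.le)
  have hslope := hy.invFunOn_comp_sub_le hq h01 hβ (hlip.mono hsub) hIcc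
    (fun t ht => (hIoo ht).1) (z' := z') <| by
    filter_upwards [measure_eq_zero_iff_ae_notMem.1 hnull, hz.ae_hasDerivAt] with t hS hderiv ht
    have ht01 : t ∈ Ioo 0 1 := ⟨h0.trans_lt ht.1, ht.2.trans_le (h1.trans hT.2.le)⟩
    exact ⟨hderiv ht01, not_lt.1 fun hlt => hS ⟨Ioo_subset_Icc_self ht01,
      Ioo_subset_Ico_self (Ioo_subset_Ioo_right hβ.2.le (hIoo ht)), hlt⟩⟩
  have hG0 := hy.invOn.1 (left_mem_Ico.2 zero_lt_one)
  rw [hy.map_zero] at hG0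
  rw [hzt₀, hzt₁, hG0] at hslope
  have hGβ := hy.mapsTo_invFunOn hβ
  have hβT : β ≤ y T := by
    rw [← hy.invOn.2 hβ]
    exact hy.strictMonoOn.monotoneOn (Ico_subset_Icc_self hGβ) (Ico_subset_Icc_self hT)
      (by linarith)
  exact hβT.not_gt hyβ

theorem lintegral_albertiLag_self (hy : IncreasingProfile y y') {q : ℝ → ℝ}
    (hq : ∀ s ∈ Ico (0:ℝ) 1, q (y s) = y' s) :
    ∫⁻ s in Icc (0:ℝ) 1, albertiLag q (y s) (y' s) = 0 := by
  rw [← Measure.restrict_congr_set Ico_ae_eq_Icc]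
  refine (setLIntegral_congr_fun measurableSet_Ico fun s hs => ?_).trans lintegral_zero
  rw [albertiLag, if_pos (Or.inl ⟨hy.mapsTo hs, (hq s hs).ge⟩)]

theorem lintegral_albertiLag_eq_top (hy : IncreasingProfile y y') {q z z' : ℝ → ℝ} {C : ℝ≥0}
    (hq : ∀ s ∈ Ico (0:ℝ) 1, q (y s) = y' s) (hz : MemW11 z z')
    (hlip : LipschitzOnWith C z (Icc 0 1))
    (hS : 0 < volume {s ∈ Icc (0:ℝ) 1 | z s ∈ Ico (0:ℝ) 1 ∧ q (z s) < z' s}) :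
    ∫⁻ s in Icc (0:ℝ) 1, albertiLag q (z s) (z' s) = ⊤ := by
  -- `q` itself need not be measurable: on `E`, `q ∘ z` is the continuous `y' ∘ y⁻¹ ∘ g`, where
  -- `g` is a global Lipschitz extension of `z`.
  obtain ⟨g, hg, hzg⟩ := hlip.extend_real
  set E := Icc (0:ℝ) 1 ∩ g ⁻¹' Ico 0 1
  have hE : MeasurableSet E :=
    measurableSet_Icc.inter (hg.continuous.measurable measurableSet_Ico)
  have hQ : AEMeasurable (fun s => y' (invFunOn y (Ico 0 1) (g s))) (volume.restrict E) :=
    (hy.continuousOn_deriv.comp (hy.continuousOn_invFunOn.comp hg.continuous.continuousOn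
      fun _ hs => hs.2) fun _ hs => hy.mapsTo_invFunOn hs.2).aemeasurable hE
  have hz' : AEMeasurable z' (volume.restrict E) := by
    have := hz.1.1.aestronglyMeasurable.aemeasurable
    rw [Measure.restrict_congr_set Ioc_ae_eq_Icc] at this
    exact this.mono_measure (Measure.restrict_mono inter_subset_left le_rfl)
  have hmeas : AEMeasurable (fun s => albertiLag q (z s) (z' s)) (volume.restrict E) := by
    refine (aemeasurable_const (b := ⊤).indicator₀ (nullMeasurableSet_lt hQ hz')).congr ?_
    filter_upwards [ae_restrict_mem hE] with s hs
    rw [albertiLag, hzg hs.1, hy.eq_deriv_invFunOn hq hs.2]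
    by_cases h : y' (invFunOn y (Ico 0 1) (g s)) < z' s <;>
      simp [h, hs.2.1, hs.2.2, not_lt.1]
  refine top_unique ((setLIntegral_eq_top_of_measure_eq_top_ne_zero hmeas
    (hS.trans_le (measure_mono ?_)).ne').ge.trans (lintegral_mono_set inter_subset_left))
  rintro s ⟨hs, hzs, hlt⟩
  refine ⟨⟨hs, show g s ∈ Ico 0 1 from hzg hs ▸ hzs⟩, ?_⟩
  rw [albertiLag, if_neg]
  rintro (⟨-, hle⟩ | hnot)
  · exact hle.not_gt hlt
  · exact hnot hzs

end IncreasingProfile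

/-- **Example 3.4 (Alberti): occurrence of the Lavrentiev phenomenon for an autonomous,
convex, lower semicontinuous extended-valued problem with both end point conditions.** -/
theorem alberti_example
    (y y' : ℝ → ℝ) (hy : MemW11 y y')
    -- `y` is `C¹` on `[0,1)` with derivative `y'`
    (hderiv : ∀ s ∈ Set.Ico (0:ℝ) 1, HasDerivAt y (y' s) s)
    (hcont : ContinuousOn y' (Set.Ico (0:ℝ) 1))
    (hy0 : y 0 = 0) (hy1 : y 1 = 1)
    (hy'pos : ∀ s ∈ Set.Ico (0:ℝ) 1, 0 < y' s)
    (hy'top : Tendsto y' (nhdsWithin 1 (Set.Iio 1)) atTop)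
    -- `q(ζ) = y'(y⁻¹(ζ))` for `ζ ∈ [0,1)`
    (q : ℝ → ℝ) (hq : ∀ s ∈ Set.Ico (0:ℝ) 1, q (y s) = y' s) :
    -- the functional vanishes at `y`
    (∫⁻ s in Set.Icc (0:ℝ) 1, albertiLag q (y s) (y' s)) = 0 ∧
    -- but is `+∞` on every Lipschitz function with the same boundary data
    ∀ z z' : ℝ → ℝ, MemW11 z z' →
      (∃ C : ℝ≥0, LipschitzOnWith C z (Set.Icc 0 1)) → z 0 = 0 → z 1 = 1 →
      0 < volume {s ∈ Set.Icc (0:ℝ) 1 | z s ∈ Set.Ico (0:ℝ) 1 ∧ q (z s) < z' s} ∧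
      (∫⁻ s in Set.Icc (0:ℝ) 1, albertiLag q (z s) (z' s)) = ⊤ := by
  have hprofile : IncreasingProfile y y' := ⟨hy.continuousOn, hderiv, hcont, hy0, hy1, hy'pos⟩
  refine ⟨hprofile.lintegral_albertiLag_self hq, fun z z' hz ⟨C, hlip⟩ hz0 hz1 => ?_⟩
  have hS := hprofile.volume_pos_of_lipschitzOnWith hy'top hq hz hlip hz0 hz1
  exact ⟨hS, hprofile.lintegral_albertiLag_eq_top hq hz hlip hS⟩
end
end

section
/- (Example 3.5: occurrence of the Lavrentiev phenomenon in an autonomous scalar problem with one end point condition.) Let y ∈ W^{1,1}([0,1];ℝ) be of class C² on [0,1), with y(0)=0, y(1)=1, y'(s) > 0 and y''(s) > 0 for all s ∈ [0,1), and lim_{s→1⁻} y'(s) = +∞ (for instance y(s) = 1 − √(1−s)); set q(ζ) := y'(y^{−1}(ζ)) for ζ ∈ [0,1). Define Λ(z,v) = 0 if z ∈ [0,1) and v ≥ q(z), and Λ(z,v) = +∞ otherwise, and F(z) = ∫_0^1 Λ(z(s),z'(s)) ds. Then F(y) = 0, while for every Lipschitz function z : [0,1] → ℝ with z(1) = 1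 there exists ε > 0 such that for a.e. s ∈ [1−ε,1] either z(s) ∉ [0,1) or z'(s) < q(z(s)); in particular F(z) = +∞ for every such Lipschitz z, so the Lavrentiev phenomenon occurs for the problem with the single end point condition z(1)=1. -/
/-!
Since `y' > 0`, `y` is strictly increasing on `[0,1]` with `y(0) = 0`, `y(1) = 1`, so it maps
`[0,1)` into itself and `Λ(y, y') = 0` there. By the intermediate value theorem every `ζ` close
to `1` from below is `y(t)` for some `t` close to `1`, so `y' → ∞` at `1⁻` becomes `q → ∞` at `1⁻`.
A `C`-Lipschitz `z` has `z' ≤ C` a.e. (Lebesgue differentiation), while near `s = 1` its values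
are close to `z(1) = 1`; hence wherever `z(s) ∈ [0,1)` on some `[1-ε,1]` we get
`z'(s) ≤ C < q(z(s))`, so `Λ(z, z') = ∞` on a set of positive measure.
-/

open MeasureTheory Set Filter ENNReal NNReal

noncomputable section

open Classical in
/-- The extended-valued autonomous Lagrangian of Example 3.5:
`Λ(z,v) = 0` if `z ∈ [0,1)` and `v ≥ q(z)`, and `+∞` otherwise. -/
def albertiLag2 (q : ℝ → ℝ) (z v : ℝ) : ℝ≥0∞ :=
  if z ∈ Set.Ico (0:ℝ) 1 ∧ q z ≤ v then 0 else ⊤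

open Topology

theorem albertiLag2_of_mem {q : ℝ → ℝ} {z v : ℝ} (hz : z ∈ Ico (0 : ℝ) 1) (hv : q z ≤ v) :
    albertiLag2 q z v = 0 :=
  if_pos ⟨hz, hv⟩

theorem albertiLag2_of_not_mem_or_lt {q : ℝ → ℝ} {z v : ℝ} (h : z ∉ Ico (0 : ℝ) 1 ∨ v < q z) :
    albertiLag2 q z v = ⊤ :=
  if_neg fun ⟨hz, hv⟩ => h.elim (· hz) (·.not_ge hv)

namespace MemW11

variable {z z' : ℝ → ℝ}

theorem continuousOn_s14 (hz : MemW11 z z') : ContinuousOn z (Icc 0 1) := by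
  have hprim := intervalIntegral.continuousOn_primitive_interval' hz.1 left_mem_uIcc
  rw [uIcc_of_le zero_le_one] at hprim
  exact (continuousOn_const.add hprim).congr hz.2

theorem ae_hasDerivAt_s14 (hz : MemW11 z z') : ∀ᵐ x, x ∈ Ioo (0 : ℝ) 1 → HasDerivAt z (z' x) x := by
  filter_upwards [hz.1.ae_hasDerivAt_integral] with x hx hx01
  have hxI : x ∈ uIcc (0 : ℝ) 1 := by rw [uIcc_of_le zero_le_one]; exact Ioo_subset_Icc_self hx01
  refine ((hx hxI 0 left_mem_uIcc).const_add (z 0)).congr_of_eventuallyEq ?_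
  filter_upwards [Ioo_mem_nhds hx01.1 hx01.2] with t ht using hz.2 t (Ioo_subset_Icc_self ht)

theorem ae_abs_le_of_lipschitzOnWith (hz : MemW11 z z') {C : ℝ≥0}
    (hlip : LipschitzOnWith C z (Icc 0 1)) : ∀ᵐ x ∂volume.restrict (Icc (0 : ℝ) 1), |z' x| ≤ C := by
  rw [← Measure.restrict_congr_set Ioo_ae_eq_Icc, ae_restrict_iff' measurableSet_Ioo]
  filter_upwards [hz.ae_hasDerivAt_s14] with x hx hx01
  exact (hx hx01).le_of_lipschitzOn (Icc_mem_nhds hx01.1 hx01.2) hlip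

theorem exists_ae_not_mem_Ico_or_lt (hz : MemW11 z z') {C : ℝ≥0}
    (hlip : LipschitzOnWith C z (Icc 0 1)) (hz1 : z 1 = 1) {q : ℝ → ℝ}
    (hq : Tendsto q (𝓝[<] 1) atTop) :
    ∃ ε : ℝ, 0 < ε ∧ ε ≤ 1 ∧ ∀ᵐ s ∂volume.restrict (Icc (1 - ε) 1),
      z s ∉ Ico (0 : ℝ) 1 ∨ z' s < q (z s) := by
  have hqC : ∀ᶠ ζ in 𝓝 (1 : ℝ), ζ < 1 → (C : ℝ) < q ζ :=
    eventually_nhdsWithin_iff.mp (hq.eventually_gt_atTop C)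
  have hzC : ∀ᶠ s in 𝓝[≤] (1 : ℝ), z s < 1 → (C : ℝ) < q (z s) := by
    have hzcont : ContinuousWithinAt z (Iic 1) 1 :=
      (hz.continuousOn_s14 1 (right_mem_Icc.mpr zero_le_one)).mono_of_mem_nhdsWithin
        (Icc_mem_nhdsLE zero_lt_one)
    rw [ContinuousWithinAt, hz1] at hzcont
    exact hzcont.eventually hqC
  obtain ⟨l, hl1, hl⟩ := mem_nhdsLE_iff_exists_Icc_subset.mp hzC
  refine ⟨min 1 (1 - l), lt_min one_pos (sub_pos.mpr hl1), min_le_left _ _, ?_⟩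
  have hsub : Icc (1 - min 1 (1 - l)) 1 ⊆ Icc l 1 ∩ Icc 0 1 := fun s hs =>
    ⟨⟨by linarith [hs.1, min_le_right 1 (1 - l)], hs.2⟩,
      ⟨by linarith [hs.1, min_le_left 1 (1 - l)], hs.2⟩⟩
  filter_upwards [ae_restrict_mem measurableSet_Icc, ae_restrict_of_ae_restrict_of_subset
    (hsub.trans inter_subset_right) (hz.ae_abs_le_of_lipschitzOnWith hlip)] with s hs hz's
  refine or_iff_not_imp_left.mpr fun hmem => ?_
  exact (le_of_abs_le hz's).trans_lt (hl (hsub hs).1 (not_not.mp hmem).2)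

end MemW11

theorem tendsto_nhdsLT_of_comp_eq {y g h : ℝ → ℝ} {a b : ℝ} {l : Filter ℝ} (hab : a < b)
    (hy : ContinuousOn y (Icc a b)) (hmono : StrictMonoOn y (Icc a b))
    (hgh : ∀ t ∈ Ico a b, g (y t) = h t) (hh : Tendsto h (𝓝[<] b) l) :
    Tendsto g (𝓝[<] (y b)) l := by
  intro U hU
  obtain ⟨c, hcb, hc⟩ := mem_nhdsLT_iff_exists_Ioo_subset.mp (hh hU)
  set c' := max c a
  have hc'b : c' < b := max_lt hcb hab
  have hyc' : y c' < y b :=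
    hmono ⟨le_max_right _ _, hc'b.le⟩ (right_mem_Icc.mpr hab.le) hc'b
  refine mem_map.mpr (mem_of_superset (Ioo_mem_nhdsLT hyc') fun ζ hζ => ?_)
  obtain ⟨t, ht, rfl⟩ :=
    intermediate_value_Ioo hc'b.le (hy.mono (Icc_subset_Icc_left (le_max_right _ _))) hζ
  show g (y t) ∈ U
  rw [hgh t ⟨(le_max_right _ _).trans ht.1.le, ht.2⟩]
  exact hc ⟨(le_max_left _ _).trans_lt ht.1, ht.2⟩

theorem setLIntegral_eq_top_of_ae_restrict_eq_top {α : Type*} [MeasurableSpace α] {μ : Measure α}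
    {f : α → ℝ≥0∞} {s t : Set α} (hst : s ⊆ t) (hs : μ s ≠ 0) (hf : ∀ᵐ x ∂μ.restrict s, f x = ⊤) :
    ∫⁻ x in t, f x ∂μ = ⊤ := by
  refine eq_top_iff.mpr (le_trans ?_ (lintegral_mono_set hst))
  rw [lintegral_congr_ae hf, setLIntegral_const, top_mul hs]

theorem alberti_example_one_endpoint_general
    (y y' : ℝ → ℝ) (hy : MemW11 y y')
    -- `y` is `C²` on `[0,1)` with first derivative `y'` and second derivative `y''`
    (hderiv : ∀ s ∈ Set.Ico (0:ℝ) 1, HasDerivAt y (y' s) s)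
    (hy0 : y 0 = 0) (hy1 : y 1 = 1)
    (hy'pos : ∀ s ∈ Set.Ico (0:ℝ) 1, 0 < y' s)
    (hy'top : Tendsto y' (nhdsWithin 1 (Set.Iio 1)) atTop)
    -- `q(ζ) = y'(y⁻¹(ζ))` for `ζ ∈ [0,1)`
    (q : ℝ → ℝ) (hq : ∀ s ∈ Set.Ico (0:ℝ) 1, q (y s) = y' s) :
    -- `F(y) = 0`
    (∫⁻ s in Set.Icc (0:ℝ) 1, albertiLag2 q (y s) (y' s)) = 0 ∧
    -- while `F(z) = +∞` for every Lipschitz `z` with `z(1) = 1`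
    ∀ z z' : ℝ → ℝ, MemW11 z z' →
      (∃ C : ℝ≥0, LipschitzOnWith C z (Set.Icc 0 1)) → z 1 = 1 →
      (∃ ε : ℝ, 0 < ε ∧ ε ≤ 1 ∧
        ∀ᵐ s ∂(volume.restrict (Set.Icc (1 - ε) 1)),
          z s ∉ Set.Ico (0:ℝ) 1 ∨ z' s < q (z s)) ∧
      (∫⁻ s in Set.Icc (0:ℝ) 1, albertiLag2 q (z s) (z' s)) = ⊤ := by
  have hycont := hy.continuousOn_s14
  have hmono : StrictMonoOn y (Icc 0 1) := by
    refine strictMonoOn_of_hasDerivWithinAt_pos (f' := y') (convex_Icc 0 1) hycont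
      (fun x hx => ?_) (fun x hx => ?_) <;> rw [interior_Icc] at hx
    · exact (hderiv x (Ioo_subset_Ico_self hx)).hasDerivWithinAt
    · exact hy'pos x (Ioo_subset_Ico_self hx)
  have hmaps : MapsTo y (Ico 0 1) (Ico 0 1) := by
    simpa only [hy0, hy1] using hmono.mapsTo_Ico
  have hq_top : Tendsto q (𝓝[<] 1) atTop :=
    hy1 ▸ tendsto_nhdsLT_of_comp_eq zero_lt_one hycont hmono hq hy'top
  refine ⟨?_, fun z z' hz ⟨C, hlip⟩ hz1 => ?_⟩
  · rw [← setLIntegral_congr Ico_ae_eq_Icc]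
    exact (setLIntegral_congr_fun measurableSet_Ico fun s hs =>
      albertiLag2_of_mem (hmaps hs) (hq s hs).le).trans lintegral_zero
  obtain ⟨ε, hε0, hε1, hae⟩ := hz.exists_ae_not_mem_Ico_or_lt hlip hz1 hq_top
  refine ⟨⟨ε, hε0, hε1, hae⟩, setLIntegral_eq_top_of_ae_restrict_eq_top
    (Icc_subset_Icc (by linarith) le_rfl) ?_ (hae.mono fun s => albertiLag2_of_not_mem_or_lt)⟩
  rw [Real.volume_Icc]
  simpa using hε0

/-- **Example 3.5: occurrence of the Lavrentiev phenomenon in an autonomous scalar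
problem with the single end point condition `z(1)=1`.** -/
theorem alberti_example_one_endpoint
    (y y' y'' : ℝ → ℝ) (hy : MemW11 y y')
    -- `y` is `C²` on `[0,1)` with first derivative `y'` and second derivative `y''`
    (hderiv : ∀ s ∈ Set.Ico (0:ℝ) 1, HasDerivAt y (y' s) s)
    (hderiv2 : ∀ s ∈ Set.Ico (0:ℝ) 1, HasDerivAt y' (y'' s) s)
    (hcont2 : ContinuousOn y'' (Set.Ico (0:ℝ) 1))
    (hy0 : y 0 = 0) (hy1 : y 1 = 1)
    (hy'pos : ∀ s ∈ Set.Ico (0:ℝ) 1, 0 < y' s)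
    (hy''pos : ∀ s ∈ Set.Ico (0:ℝ) 1, 0 < y'' s)
    (hy'top : Tendsto y' (nhdsWithin 1 (Set.Iio 1)) atTop)
    -- `q(ζ) = y'(y⁻¹(ζ))` for `ζ ∈ [0,1)`
    (q : ℝ → ℝ) (hq : ∀ s ∈ Set.Ico (0:ℝ) 1, q (y s) = y' s) :
    -- `F(y) = 0`
    (∫⁻ s in Set.Icc (0:ℝ) 1, albertiLag2 q (y s) (y' s)) = 0 ∧
    -- while `F(z) = +∞` for every Lipschitz `z` with `z(1) = 1`
    ∀ z z' : ℝ → ℝ, MemW11 z z' →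
      (∃ C : ℝ≥0, LipschitzOnWith C z (Set.Icc 0 1)) → z 1 = 1 →
      (∃ ε : ℝ, 0 < ε ∧ ε ≤ 1 ∧
        ∀ᵐ s ∂(volume.restrict (Set.Icc (1 - ε) 1)),
          z s ∉ Set.Ico (0:ℝ) 1 ∨ z' s < q (z s)) ∧
      (∫⁻ s in Set.Icc (0:ℝ) 1, albertiLag2 q (z s) (z' s)) = ⊤ :=
  alberti_example_one_endpoint_general y y' hy hderiv hy0 hy1 hy'pos hy'top q hq
end
end
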